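/- arXiv:2304.07472 — 8 statements merged into one kernel-verified Lean document; each statement's English description precedes it below -/
import Mathlib

section
/- Strong minimax duality holds for Generalized Kernel Learning: with 𝒳 := {P ∈ S^{n_P} : trace(P) = n_P, P ⪰ 0}, 𝒴 a compact convex subset of ℝ^m, data points x_1,…,x_m ∈ X, weights e ∈ ℝ^m, a continuous concave function κ : ℝ^m → ℝ, and λ(α,P) := −(1/2) ∑_{i=1}^m ∑_{j=1}^m α_i α_j ∫_Y N(z,x_i)ᵀ P N(z,x_j) dz, one has min_{P ∈ 𝒳} max_{α ∈ 𝒴} [λ(e ⊙ α, P) + κ(α)] = max_{α ∈ 𝒴} min_{P ∈ 𝒳} [λ(e ⊙ α, P) + κ(α)]. In particular this holds for classification (𝒴 = 𝒴_c := {α ∈ ℝ^m : ∑_i α_i y_i = 0, 0 ≤ α_i ≤ C}, e = y, κ(α) = ∑_i α_i) and for regression (𝒴 = 𝒴_r := {α ∈ ℝ^m : ∑_i α_i = 0, α_i ∈ [−C,C]}, e = 𝟏, κ(α) = −ε∑_i|α_i| + ∑_i y_i α_i). -/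
open MeasureTheory Matrix Set

section helpers

variable {k : ℕ}

/-- double sums split over addition -/
private lemma sum2_add {m : ℕ} (f g : Fin m → Fin m → ℝ) :
    ∑ i, ∑ j, (f i j + g i j) = (∑ i, ∑ j, f i j) + ∑ i, ∑ j, g i j := by
  rw [← Finset.sum_add_distrib]
  exact Finset.sum_congr rfl fun i _ => Finset.sum_add_distrib

private lemma sum2_mul {m : ℕ} (r : ℝ) (f : Fin m → Fin m → ℝ) :
    ∑ i, ∑ j, r * f i j = r * ∑ i, ∑ j, f i j := by
  rw [Finset.mul_sum]
  exact Finset.sum_congr rfl fun i _ => (Finset.mul_sum _ _ _).symm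

private lemma sum_dot {ι : Type*} (s : Finset ι) (f : ι → Fin k → ℝ) (w : Fin k → ℝ) :
    (∑ i ∈ s, f i) ⬝ᵥ w = ∑ i ∈ s, f i ⬝ᵥ w := by
  simp only [dotProduct, Finset.sum_apply, Finset.sum_mul]
  exact Finset.sum_comm

private lemma dot_sum {ι : Type*} (s : Finset ι) (v : Fin k → ℝ) (f : ι → Fin k → ℝ) :
    v ⬝ᵥ (∑ i ∈ s, f i) = ∑ i ∈ s, v ⬝ᵥ f i := by
  simp only [dotProduct, Finset.sum_apply, Finset.mul_sum]
  exact Finset.sum_comm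

private lemma mulVec_sum' {ι : Type*} (s : Finset ι) (P : Matrix (Fin k) (Fin k) ℝ)
    (f : ι → Fin k → ℝ) : P *ᵥ (∑ i ∈ s, f i) = ∑ i ∈ s, P *ᵥ f i := by
  funext a
  show (P a) ⬝ᵥ (∑ i ∈ s, f i) = _
  rw [dot_sum]
  simp [Matrix.mulVec]

private lemma quad_comm (P : Matrix (Fin k) (Fin k) ℝ) (hP : P.IsHermitian)
    (v w : Fin k → ℝ) : v ⬝ᵥ P *ᵥ w = w ⬝ᵥ P *ᵥ v := by
  have hPt : Pᵀ = P := by simpa [Matrix.IsSymm] using hP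
  rw [Matrix.dotProduct_mulVec]
  conv_lhs => rw [← hPt, Matrix.vecMul_transpose]
  exact dotProduct_comm _ _

private lemma quad_single (P : Matrix (Fin k) (Fin k) ℝ) (a b : Fin k) :
    Pi.single a (1:ℝ) ⬝ᵥ P *ᵥ Pi.single b 1 = P a b := by
  rw [Matrix.mulVec_single_one, single_dotProduct]
  simp

private lemma psd_smul {P : Matrix (Fin k) (Fin k) ℝ} (h : P.PosSemidef) {c : ℝ}
    (hc : 0 ≤ c) : (c • P).PosSemidef := by
  constructor
  · show (c • P)ᴴ = c • P
    rw [Matrix.conjTranspose_smul, h.1.eq]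
    simp
  · exact (h.smul hc).2

end helpers

section Minimax

variable {E F : Type*} [AddCommGroup E] [Module ℝ E] [TopologicalSpace E]
  [AddCommGroup F] [Module ℝ F] [TopologicalSpace F]

private lemma bddA {S : Set E} (hS : IsCompact S) {g : E → ℝ} (hg : ContinuousOn g S) :
    BddAbove (Set.range fun P : S => g P) := by
  obtain ⟨C, hC⟩ := hS.exists_bound_of_continuousOn hg
  exact ⟨C, by rintro _ ⟨P, rfl⟩; exact (abs_le.mp (by simpa using hC P P.2)).2⟩

private lemma bddB {S : Set E} (hS : IsCompact S) {g : E → ℝ} (hg : ContinuousOn g S) :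
    BddBelow (Set.range fun P : S => g P) := by
  obtain ⟨C, hC⟩ := hS.exists_bound_of_continuousOn hg
  exact ⟨-C, by rintro _ ⟨P, rfl⟩; exact (abs_le.mp (by simpa using hC P P.2)).1⟩

theorem minimax_aux {S : Set E} {A : Set F} (hS : IsCompact S) (hSconv : Convex ℝ S)
    (hSne : S.Nonempty) (hA : IsCompact A) (hAconv : Convex ℝ A) (hAne : A.Nonempty)
    (f : E → F → ℝ)
    (haff : ∀ α ∈ A, ∀ P ∈ S, ∀ Q ∈ S, ∀ t : ℝ, 0 ≤ t → t ≤ 1 →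
      f (t • P + (1 - t) • Q) α = t * f P α + (1 - t) * f Q α)
    (hcontP : ∀ α ∈ A, ContinuousOn (fun P => f P α) S)
    (hcontA : ∀ P ∈ S, ContinuousOn (f P) A)
    (hconc : ∀ P ∈ S, ConcaveOn ℝ A (f P)) :
    (⨅ P : S, ⨆ α : A, f P α) = ⨆ α : A, ⨅ P : S, f P α := by
  have hSne' : Nonempty S := hSne.to_subtype
  have hAne' : Nonempty A := hAne.to_subtype
  obtain ⟨P₀, hP₀⟩ := hSne
  obtain ⟨α₀, hα₀⟩ := hAne
  -- boundedness facts
  have hBA : ∀ P : S, BddAbove (Set.range fun α : A => f P α) :=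
    fun P => bddA hA (hcontA P P.2)
  have hBb : ∀ α : A, BddBelow (Set.range fun P : S => f P α) :=
    fun α => bddB hS (hcontP α α.2)
  -- the inner infima are uniformly bounded above
  obtain ⟨C₀, hC₀⟩ := hA.exists_bound_of_continuousOn (hcontA P₀ hP₀)
  have hBsupinf : BddAbove (Set.range fun α : A => ⨅ P : S, f P α) := by
    refine ⟨C₀, ?_⟩
    rintro _ ⟨α, rfl⟩
    exact le_trans (ciInf_le (hBb α) ⟨P₀, hP₀⟩)
      ((abs_le.mp (by simpa using hC₀ α α.2)).2)
  -- the inner suprema are uniformly bounded below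
  obtain ⟨C₁, hC₁⟩ := hS.exists_bound_of_continuousOn (hcontP α₀ hα₀)
  have hBinfsup : BddBelow (Set.range fun P : S => ⨆ α : A, f P α) := by
    refine ⟨-C₁, ?_⟩
    rintro _ ⟨P, rfl⟩
    exact le_trans ((abs_le.mp (by simpa using hC₁ P P.2)).1)
      (le_ciSup (hBA P) ⟨α₀, hα₀⟩)
  set c : ℝ := ⨆ α : A, ⨅ P : S, f P α with hc
  refine le_antisymm ?_ ?_
  · -- hard direction
    by_contra hcon
    push_neg at hcon
    -- for every P there is α with c < f P α
    have hex : ∀ P : S, ∃ α : A, c < f (P : E) α := by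
      intro P
      by_contra h
      push_neg at h
      have : (⨆ α : A, f (P : E) α) ≤ c := ciSup_le h
      have h2 : c < ⨆ α : A, f (P : E) α :=
        lt_of_lt_of_le hcon (ciInf_le hBinfsup P)
      linarith
    -- finite subcover
    haveI : CompactSpace S := isCompact_iff_compactSpace.mp hS
    have hopen : ∀ α : A, IsOpen {P : S | c < f (P : E) α} := by
      intro α
      have : Continuous fun P : S => f (P : E) (α : F) := (hcontP α α.2).restrict
      exact isOpen_Ioi.preimage this
    have hcover : (Set.univ : Set S) ⊆ ⋃ α : A, {P : S | c < f (P : E) α} := by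
      intro P _
      obtain ⟨α, hα⟩ := hex P
      exact Set.mem_iUnion.mpr ⟨α, hα⟩
    obtain ⟨t, ht⟩ := isCompact_univ.elim_finite_subcover _ hopen hcover
    have hexfin : ∀ P : S, ∃ i ∈ t, c < f (P : E) (i : F) := by
      intro P
      have := ht (Set.mem_univ P)
      simp only [Set.mem_iUnion, Set.mem_setOf_eq] at this
      obtain ⟨i, hi, h⟩ := this
      exact ⟨i, hi, h⟩
    -- separation in (↥t → ℝ)
    classical
    let Φ : E → (t → ℝ) := fun P i => f P ((i : A) : F) - c
    let O : Set (t → ℝ) := {u | ∀ i, u i ≤ 0}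
    have hOconv : Convex ℝ O := by
      intro u hu v hv a b ha hb hab
      intro i
      have := hu i; have := hv i
      simp only [Pi.add_apply, Pi.smul_apply, smul_eq_mul]
      nlinarith
    have hOclosed : IsClosed O := by
      have : O = ⋂ i : t, (fun u : t → ℝ => u i) ⁻¹' Iic (0:ℝ) := by
        ext u; simp [O]
      rw [this]
      exact isClosed_iInter fun i => isClosed_Iic.preimage (continuous_apply i)
    have hΦcont : ContinuousOn Φ S := by
      apply continuousOn_pi.mpr
      intro i
      exact (hcontP _ (i : A).2).sub continuousOn_const
    have hKcomp : IsCompact (Φ '' S) := hS.image_of_continuousOn hΦcont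
    have hKconv : Convex ℝ (Φ '' S) := by
      rintro _ ⟨P, hP, rfl⟩ _ ⟨Q, hQ, rfl⟩ a b ha hb hab
      refine ⟨a • P + b • Q, hSconv hP hQ ha hb hab, ?_⟩
      funext i
      have hb' : b = 1 - a := by linarith
      have := haff _ (i : A).2 P hP Q hQ a ha (by linarith)
      simp only [Φ, Pi.add_apply, Pi.smul_apply, smul_eq_mul]
      rw [hb'] at *
      rw [this]
      ring
    have hdisj : Disjoint O (Φ '' S) := by
      rw [Set.disjoint_left]
      rintro u hu ⟨P, hP, rfl⟩
      obtain ⟨i, hi, h⟩ := hexfin ⟨P, hP⟩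
      have := hu ⟨i, hi⟩
      simp only [Φ] at this
      simp only at h
      linarith
    obtain ⟨g, u0, v0, hgO, huv, hgK⟩ :=
      geometric_hahn_banach_closed_compact hOconv hOclosed hKconv hKcomp hdisj
    -- coefficients
    let w : { x // x ∈ t } → ℝ := fun i => g (Pi.single (M := fun _ : { x // x ∈ t } => ℝ) i 1)
    have hrep : ∀ y : t → ℝ, g y = ∑ i, y i * w i := by
      intro y
      have hy : y = ∑ i, y i • Pi.single (M := fun _ : { x // x ∈ t } => ℝ) i 1 := by
        have := Finset.univ_sum_single y
        rw [← this]
        congr 1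
        funext i
        funext j
        by_cases h : i = j <;> simp [Pi.single_apply, h]
      conv_lhs => rw [hy]
      rw [_root_.map_sum]
      congr 1
      funext i
      rw [_root_.map_smul]
      simp [w, smul_eq_mul]
    have hu0pos : 0 < u0 := by
      have h0 : (0 : t → ℝ) ∈ O := fun i => le_refl 0
      have := hgO 0 h0
      simpa using this
    have hwnn : ∀ i, 0 ≤ w i := by
      intro i
      by_contra h
      push_neg at h
      set s : ℝ := (u0 + 1) / (-w i) with hs
      have hwi : 0 < -w i := by linarith
      have hspos : 0 < s := div_pos (by linarith) hwi
      have hmem : (-s) • Pi.single (M := fun _ : { x // x ∈ t } => ℝ) i 1 ∈ O := by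
        intro j
        by_cases hj : j = i <;> simp [Pi.single_apply, hj, hspos.le]
      have := hgO _ hmem
      rw [_root_.map_smul] at this
      have hval : g (Pi.single (M := fun _ : { x // x ∈ t } => ℝ) i 1) = w i := rfl
      rw [hval] at this
      simp only [smul_eq_mul] at this
      have : -s * w i = s * (-w i) := by ring
      have hval2 : s * (-w i) = u0 + 1 := by
        rw [hs]; exact div_mul_cancel₀ _ (ne_of_gt hwi)
      have := hgO _ hmem
      rw [_root_.map_smul, hval] at this
      simp only [smul_eq_mul] at this
      nlinarith
    -- positivity of total weight
    have hv0pos : 0 < v0 := lt_trans hu0pos huv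
    set T : ℝ := ∑ i, w i with hT
    have hTnn : 0 ≤ T := Finset.sum_nonneg fun i _ => hwnn i
    have hTpos : 0 < T := by
      rcases lt_or_eq_of_le hTnn with h | h
      · exact h
      · exfalso
        have hall : ∀ i, w i = 0 := by
          intro i
          have := (Finset.sum_eq_zero_iff_of_nonneg (fun i _ => hwnn i)).mp h.symm
          exact this i (Finset.mem_univ i)
        have hz : g (Φ P₀) = 0 := by
          rw [hrep]
          simp [hall]
        have := hgK _ ⟨P₀, hP₀, rfl⟩
        rw [hz] at this
        linarith
    -- the mixed strategy
    let ᾱ : F := ∑ i, (w i / T) • ((i : A) : F)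
    have hᾱA : ᾱ ∈ A := by
      refine hAconv.sum_mem (fun i _ => div_nonneg (hwnn i) hTnn) ?_ (fun i _ => (i : A).2)
      rw [← Finset.sum_div, ← hT]
      exact div_self hTpos.ne'
    -- key inequality
    have hkey : ∀ P ∈ S, c + v0 / T ≤ f P ᾱ := by
      intro P hP
      have h1 : v0 < ∑ i, w i * (f P ((i : A) : F) - c) := by
        have := hgK _ ⟨P, hP, rfl⟩
        rw [hrep] at this
        simpa [Φ, mul_comm] using this
      have h2 : ∑ i, (w i / T) • f P ((i : A) : F) ≤ f P ᾱ :=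
        (hconc P hP).le_map_sum (fun i _ => div_nonneg (hwnn i) hTnn)
          (by rw [← Finset.sum_div, ← hT]; exact div_self hTpos.ne') (fun i _ => (i : A).2)
      have e1 : ∑ i, (w i / T) • f P ((i : A) : F)
          = (∑ i, w i * f P ((i : A) : F)) / T := by
        rw [Finset.sum_div]
        exact Finset.sum_congr rfl fun i _ => by
          rw [smul_eq_mul, div_mul_eq_mul_div]
      have e2 : ∑ i, w i * (f P ((i : A) : F) - c)
          = (∑ i, w i * f P ((i : A) : F)) - T * c := by
        simp only [mul_sub]
        rw [Finset.sum_sub_distrib, ← Finset.sum_mul, ← hT]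
      have h4 : (v0 + T * c) / T < (∑ i, w i * f P ((i : A) : F)) / T := by
        apply div_lt_div_of_pos_right _ hTpos
        rw [e2] at h1
        linarith
      have h5 : (v0 + T * c) / T = v0 / T + c := by
        rw [add_div, mul_comm, mul_div_assoc, div_self hTpos.ne', mul_one]
      rw [e1] at h2
      linarith
    have hcontr : c + v0 / T ≤ c := by
      have h5 : c + v0 / T ≤ ⨅ P : S, f (P : E) ᾱ :=
        le_ciInf fun P => hkey P P.2
      have h6 : (⨅ P : S, f (P : E) ᾱ) ≤ c := le_ciSup hBsupinf ⟨ᾱ, hᾱA⟩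
      linarith
    have : 0 < v0 / T := div_pos hv0pos hTpos
    linarith
  · -- easy direction
    refine le_ciInf fun P => ?_
    refine ciSup_mono (hBA P) fun α => ?_
    exact ciInf_le (hBb α) P

/-- strong minimax duality for Generalized Kernel Learning. -/
theorem stmt_1 {n p nP m : ℕ}
    (X : Set (Fin n → ℝ)) (Yint : Set (Fin p → ℝ))
    (hX : IsCompact X) (hY : IsCompact Yint)
    (N : (Fin p → ℝ) → (Fin n → ℝ) → (Fin nP → ℝ))
    (hNmeas : ∀ x, Measurable fun z => N z x)
    (hNbdd : ∃ M, ∀ z x i, |N z x i| ≤ M)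
    (A : Set (Fin m → ℝ)) (hAcomp : IsCompact A) (hAconv : Convex ℝ A)
    (x : Fin m → (Fin n → ℝ)) (hx : ∀ i, x i ∈ X)
    (e : Fin m → ℝ)
    (κ : (Fin m → ℝ) → ℝ) (hκcont : Continuous κ) (hκconc : ConcaveOn ℝ Set.univ κ)
    (φ : Matrix (Fin nP) (Fin nP) ℝ → (Fin m → ℝ) → ℝ)
    (hφ : ∀ P α, φ P α =
      -(1/2) * ∑ i, ∑ j, (e i * α i) * (e j * α j) *
        (∫ z in Yint, N z (x i) ⬝ᵥ P.mulVec (N z (x j))) + κ α) :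
    (⨅ P : {P : Matrix (Fin nP) (Fin nP) ℝ // P.trace = (nP : ℝ) ∧ P.PosSemidef},
      ⨆ α : A, φ P.1 α.1) =
    (⨆ α : A, ⨅ P : {P : Matrix (Fin nP) (Fin nP) ℝ // P.trace = (nP : ℝ) ∧ P.PosSemidef},
      φ P.1 α.1) := by
  classical
  set S : Set (Matrix (Fin nP) (Fin nP) ℝ) :=
    {P | P.trace = (nP : ℝ) ∧ P.PosSemidef} with hSdef
  -- S is nonempty
  have hSne : S.Nonempty := by
    refine ⟨1, ?_, Matrix.PosSemidef.one⟩
    simp [Matrix.trace_one]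
  -- dispose of the degenerate case A = ∅
  rcases A.eq_empty_or_nonempty with hAe | hAne
  · subst hAe
    haveI : IsEmpty (↥(∅ : Set (Fin m → ℝ))) := ⟨fun a => (Set.notMem_empty _ a.2)⟩
    haveI : Nonempty {P : Matrix (Fin nP) (Fin nP) ℝ // P.trace = (nP : ℝ) ∧ P.PosSemidef} :=
      ⟨⟨hSne.choose, hSne.choose_spec⟩⟩
    rw [Real.iSup_of_isEmpty]
    rw [iInf_congr fun P => Real.iSup_of_isEmpty _]
    exact ciInf_const
  -- bounds on N
  obtain ⟨M0, hM0⟩ := hNbdd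
  set M' : ℝ := max M0 0 with hM'def
  have hM'nn : (0:ℝ) ≤ M' := le_max_right _ _
  have hNb : ∀ z xx i, |N z xx i| ≤ M' := fun z xx i => le_trans (hM0 z xx i) (le_max_left _ _)
  have hmeas : ∀ (xx : Fin n → ℝ) (a : Fin nP), Measurable fun z => N z xx a :=
    fun xx a => (measurable_pi_apply a).comp (hNmeas xx)
  haveI hfin : IsFiniteMeasure (volume.restrict Yint) :=
    ⟨by rw [Measure.restrict_apply_univ]; exact hY.measure_lt_top⟩
  -- integrability of coordinate products
  have hint2 : ∀ (i j : Fin m) (a b : Fin nP),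
      Integrable (fun z => N z (x i) a * N z (x j) b) (volume.restrict Yint) := by
    intro i j a b
    refine ⟨((hmeas (x i) a).mul (hmeas (x j) b)).aestronglyMeasurable, ?_⟩
    refine HasFiniteIntegral.of_bounded (C := M' * M') (Filter.Eventually.of_forall fun z => ?_)
    rw [Real.norm_eq_abs, abs_mul]
    exact mul_le_mul (hNb _ _ _) (hNb _ _ _) (abs_nonneg _) hM'nn
  -- integrability of the quadratic integrand
  have hintq : ∀ (P : Matrix (Fin nP) (Fin nP) ℝ) (i j : Fin m),
      Integrable (fun z => N z (x i) ⬝ᵥ P *ᵥ N z (x j)) (volume.restrict Yint) := by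
    intro P i j
    have hmeasq : Measurable fun z => N z (x i) ⬝ᵥ P *ᵥ N z (x j) := by
      show Measurable fun z => ∑ a, N z (x i) a * ∑ b, P a b * N z (x j) b
      exact Finset.measurable_sum _ fun a _ => (hmeas (x i) a).mul
        (Finset.measurable_sum _ fun b _ => measurable_const.mul (hmeas (x j) b))
    refine ⟨hmeasq.aestronglyMeasurable, ?_⟩
    refine HasFiniteIntegral.of_bounded (C := M' * M' * ∑ a, ∑ b, |P a b|)
      (Filter.Eventually.of_forall fun z => ?_)
    rw [Real.norm_eq_abs]
    show |∑ a, N z (x i) a * ∑ b, P a b * N z (x j) b| ≤ _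
    calc |∑ a, N z (x i) a * ∑ b, P a b * N z (x j) b|
        ≤ ∑ a, |N z (x i) a * ∑ b, P a b * N z (x j) b| := Finset.abs_sum_le_sum_abs _ _
      _ ≤ ∑ a, M' * ∑ b, |P a b| * M' := by
          refine Finset.sum_le_sum fun a _ => ?_
          rw [abs_mul]
          refine mul_le_mul (hNb _ _ _) ?_ (abs_nonneg _) hM'nn
          calc |∑ b, P a b * N z (x j) b| ≤ ∑ b, |P a b * N z (x j) b| :=
                Finset.abs_sum_le_sum_abs _ _
            _ ≤ ∑ b, |P a b| * M' := Finset.sum_le_sum fun b _ => by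
                rw [abs_mul]; exact mul_le_mul_of_nonneg_left (hNb _ _ _) (abs_nonneg _)
      _ = M' * M' * ∑ a, ∑ b, |P a b| := by
          rw [Finset.mul_sum]
          refine Finset.sum_congr rfl fun a _ => ?_
          rw [Finset.mul_sum, Finset.mul_sum]
          exact Finset.sum_congr rfl fun b _ => by ring
  -- the kernel matrix
  set K : Matrix (Fin nP) (Fin nP) ℝ → Fin m → Fin m → ℝ :=
    fun P i j => ∫ z in Yint, N z (x i) ⬝ᵥ P *ᵥ N z (x j) with hKdef
  set G : Fin m → Fin m → Fin nP → Fin nP → ℝ :=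
    fun i j a b => ∫ z in Yint, N z (x i) a * N z (x j) b with hGdef
  have hφK : ∀ P α, φ P α
      = -(1/2) * ∑ i, ∑ j, (e i * α i) * (e j * α j) * K P i j + κ α := by
    intro P α
    rw [hφ P α]
  -- entrywise representation of K
  have hKrep : ∀ P i j, K P i j = ∑ a, ∑ b, P a b * G i j a b := by
    intro P i j
    have hpt : (fun z => N z (x i) ⬝ᵥ P *ᵥ N z (x j))
        = fun z => ∑ a, ∑ b, P a b * (N z (x i) a * N z (x j) b) := by
      funext z
      show ∑ a, N z (x i) a * ∑ b, P a b * N z (x j) b = _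
      refine Finset.sum_congr rfl fun a _ => ?_
      rw [Finset.mul_sum]
      exact Finset.sum_congr rfl fun b _ => by ring
    simp only [hKdef, hGdef]
    rw [hpt]
    rw [integral_finset_sum (f := fun a z => ∑ b, P a b * (N z (x i) a * N z (x j) b)) _
      (fun a _ => integrable_finset_sum _
      (fun b _ => (hint2 i j a b).const_mul _))]
    refine Finset.sum_congr rfl fun a _ => ?_
    rw [integral_finset_sum _ (fun b _ => (hint2 i j a b).const_mul _)]
    exact Finset.sum_congr rfl fun b _ => integral_const_mul _ _
  -- symmetry of K for Hermitian P
  have hKsymm : ∀ P : Matrix (Fin nP) (Fin nP) ℝ, P.IsHermitian → ∀ i j, K P i j = K P j i := by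
    intro P hP i j
    simp only [hKdef]
    have : (fun z => N z (x i) ⬝ᵥ P *ᵥ N z (x j))
        = fun z => N z (x j) ⬝ᵥ P *ᵥ N z (x i) := funext fun z => quad_comm P hP _ _
    rw [this]
  -- nonnegativity of the quadratic form
  have hqnn : ∀ P : Matrix (Fin nP) (Fin nP) ℝ, P.PosSemidef → ∀ c : Fin m → ℝ,
      0 ≤ ∑ i, ∑ j, c i * c j * K P i j := by
    intro P hP c
    have h1 : (∫ z in Yint, ∑ i, ∑ j, c i * c j * (N z (x i) ⬝ᵥ P *ᵥ N z (x j)))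
        = ∑ i, ∑ j, c i * c j * K P i j := by
      rw [integral_finset_sum _ (fun i _ => integrable_finset_sum _
        (fun j _ => (hintq P i j).const_mul _))]
      refine Finset.sum_congr rfl fun i _ => ?_
      rw [integral_finset_sum _ (fun j _ => (hintq P i j).const_mul _)]
      refine Finset.sum_congr rfl fun j _ => ?_
      simp only [hKdef]
      exact integral_const_mul _ _
    rw [← h1]
    have hpt : ∀ z, ∑ i, ∑ j, c i * c j * (N z (x i) ⬝ᵥ P *ᵥ N z (x j))
        = (∑ i, c i • N z (x i)) ⬝ᵥ P *ᵥ (∑ j, c j • N z (x j)) := by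
      intro z
      symm
      rw [sum_dot]
      refine Finset.sum_congr rfl fun i _ => ?_
      rw [smul_dotProduct, mulVec_sum', dot_sum, smul_eq_mul, Finset.mul_sum]
      refine Finset.sum_congr rfl fun j _ => ?_
      rw [Matrix.mulVec_smul, dotProduct_smul, smul_eq_mul]
      ring
    refine integral_nonneg fun z => ?_
    rw [hpt z]
    simpa using hP.dotProduct_mulVec_nonneg (∑ j, c j • N z (x j))
  -- linearity of K in P
  have hKlin : ∀ (t : ℝ) (P Q : Matrix (Fin nP) (Fin nP) ℝ) (i j : Fin m),
      K (t • P + (1-t) • Q) i j = t * K P i j + (1-t) * K Q i j := by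
    intro t P Q i j
    rw [hKrep, hKrep, hKrep, ← sum2_mul, ← sum2_mul, ← sum2_add]
    refine Finset.sum_congr rfl fun a _ => Finset.sum_congr rfl fun b _ => ?_
    simp only [Matrix.add_apply, Matrix.smul_apply, smul_eq_mul]
    ring
  -- hypotheses of the minimax theorem
  have haff : ∀ α ∈ A, ∀ P ∈ S, ∀ Q ∈ S, ∀ t : ℝ, 0 ≤ t → t ≤ 1 →
      φ (t • P + (1-t) • Q) α = t * φ P α + (1-t) * φ Q α := by
    intro α _ P _ Q _ t _ _
    rw [hφK, hφK, hφK]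
    have hterm : ∀ i j, (e i * α i) * (e j * α j) * K (t • P + (1-t) • Q) i j
        = t * ((e i * α i) * (e j * α j) * K P i j)
          + (1-t) * ((e i * α i) * (e j * α j) * K Q i j) := by
      intro i j; rw [hKlin]; ring
    rw [Finset.sum_congr rfl fun i _ => Finset.sum_congr rfl fun j _ => hterm i j,
      sum2_add, sum2_mul, sum2_mul]
    ring
  have hcontP : ∀ α ∈ A, ContinuousOn (fun P => φ P α) S := by
    intro α _
    apply Continuous.continuousOn
    have hrw : (fun P => φ P α) = fun P : Matrix (Fin nP) (Fin nP) ℝ =>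
        -(1/2) * ∑ i, ∑ j, (e i * α i) * (e j * α j) * (∑ a, ∑ b, P a b * G i j a b) + κ α := by
      funext P
      rw [hφK]
      congr 2
      exact Finset.sum_congr rfl fun i _ => Finset.sum_congr rfl fun j _ => by rw [hKrep]
    rw [hrw]
    refine (continuous_const.mul (continuous_finset_sum _ fun i _ =>
      continuous_finset_sum _ fun j _ => continuous_const.mul
      (continuous_finset_sum _ fun a _ => continuous_finset_sum _ fun b _ =>
        (continuous_id.matrix_elem a b).mul continuous_const))).add
      continuous_const
  have hcontA : ∀ P ∈ S, ContinuousOn (φ P) A := by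
    intro P _
    apply Continuous.continuousOn
    have hrw : φ P = fun α => -(1/2) * ∑ i, ∑ j,
        (e i * α i) * (e j * α j) * K P i j + κ α := funext fun α => hφK P α
    rw [hrw]
    refine (continuous_const.mul (continuous_finset_sum _ fun i _ =>
      continuous_finset_sum _ fun j _ =>
      ((continuous_const.mul (continuous_apply i)).mul
        (continuous_const.mul (continuous_apply j))).mul continuous_const)).add hκcont
  have hconc : ∀ P ∈ S, ConcaveOn ℝ A (φ P) := by
    intro P hPS
    have hPsd : P.PosSemidef := hPS.2
    have hsym : ∀ i j, K P i j = K P j i := hKsymm P hPsd.1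
    have hBex : ∀ (u w : Fin m → ℝ) (a b : ℝ),
        ∑ i, ∑ j, (a * u i + b * w i) * (a * u j + b * w j) * K P i j
          = a^2 * (∑ i, ∑ j, u i * u j * K P i j)
            + (2*a*b) * (∑ i, ∑ j, u i * w j * K P i j)
            + b^2 * (∑ i, ∑ j, w i * w j * K P i j) := by
      intro u w a b
      have hswap : ∑ i, ∑ j, w i * u j * K P i j = ∑ i, ∑ j, u i * w j * K P i j := by
        rw [Finset.sum_comm]
        exact Finset.sum_congr rfl fun i _ => Finset.sum_congr rfl fun j _ => by
          rw [hsym j i]; ring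
      have hterm : ∀ i j, (a * u i + b * w i) * (a * u j + b * w j) * K P i j
          = (a^2 * (u i * u j * K P i j) + (a*b) * (u i * w j * K P i j))
            + ((a*b) * (w i * u j * K P i j) + b^2 * (w i * w j * K P i j)) := by
        intro i j; ring
      rw [Finset.sum_congr rfl fun i _ => Finset.sum_congr rfl fun j _ => hterm i j,
        sum2_add, sum2_add, sum2_add, sum2_mul, sum2_mul, sum2_mul, sum2_mul, hswap]
      ring
    refine ⟨hAconv, ?_⟩
    intro α hα β hβ a b ha hb hab
    rw [hφK, hφK, hφK]
    have hcomb : ∀ i : Fin m, e i * (a • α + b • β) i = a * (e i * α i) + b * (e i * β i) := by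
      intro i
      simp only [Pi.add_apply, Pi.smul_apply, smul_eq_mul]
      ring
    set Quu : ℝ := ∑ i, ∑ j, (e i * α i) * (e j * α j) * K P i j with hQuu
    set Quw : ℝ := ∑ i, ∑ j, (e i * α i) * (e j * β j) * K P i j with hQuw
    set Qww : ℝ := ∑ i, ∑ j, (e i * β i) * (e j * β j) * K P i j with hQww
    have hQ : ∑ i, ∑ j, (e i * (a • α + b • β) i) * (e j * (a • α + b • β) j) * K P i j
        = a^2 * Quu + (2*a*b) * Quw + b^2 * Qww := by
      rw [Finset.sum_congr rfl fun i _ => Finset.sum_congr rfl fun j _ => by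
        rw [hcomb i, hcomb j]]
      exact hBex _ _ a b
    have hcross : 2 * Quw ≤ Quu + Qww := by
      have h0 := hqnn P hPsd (fun i => e i * α i - e i * β i)
      have heq : ∑ i, ∑ j, ((fun i => e i * α i - e i * β i) i)
            * ((fun i => e i * α i - e i * β i) j) * K P i j
          = ∑ i, ∑ j, ((1:ℝ) * (e i * α i) + (-1) * (e i * β i))
            * ((1:ℝ) * (e j * α j) + (-1) * (e j * β j)) * K P i j :=
        Finset.sum_congr rfl fun i _ => Finset.sum_congr rfl fun j _ => by ring
      rw [heq, hBex _ _ 1 (-1)] at h0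
      rw [← hQuu, ← hQuw, ← hQww] at h0
      nlinarith [h0]
    have hκ := hκconc.2 (Set.mem_univ α) (Set.mem_univ β) ha hb hab
    simp only [smul_eq_mul] at hκ ⊢
    rw [hQ]
    have h5 : 0 ≤ (a * b) * (Quu + Qww - 2 * Quw) :=
      mul_nonneg (mul_nonneg ha hb) (by linarith)
    have hb' : b = 1 - a := by linarith
    rw [hb'] at h5 hκ ⊢
    nlinarith [h5, hκ]
  -- compactness of S
  have hSsub : S ⊆ Set.univ.pi fun _ : Fin nP =>
      Set.univ.pi fun _ : Fin nP => Set.Icc (-(nP:ℝ)) nP := by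
    intro P hP
    obtain ⟨htr, hpsd⟩ := hP
    have hsymm : ∀ a b, P b a = P a b := fun a b => by
      conv_lhs => rw [← hpsd.1.eq]
      simp [Matrix.conjTranspose_apply]
    have hdiag : ∀ a, 0 ≤ P a a := by
      intro a
      have := hpsd.dotProduct_mulVec_nonneg (Pi.single a (1:ℝ))
      simpa [quad_single] using this
    have htr' : ∑ b, P b b = (nP:ℝ) := htr
    have hdiag' : ∀ a, P a a ≤ (nP:ℝ) := by
      intro a
      calc P a a ≤ ∑ b, P b b := Finset.single_le_sum (fun b _ => hdiag b) (Finset.mem_univ a)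
        _ = (nP:ℝ) := htr'
    have hexp : ∀ (a b : Fin nP) (c : ℝ),
        (Pi.single a (1:ℝ) + c • Pi.single (M := fun _ : Fin nP => ℝ) b 1) ⬝ᵥ P *ᵥ (Pi.single a (1:ℝ) + c • Pi.single (M := fun _ : Fin nP => ℝ) b 1)
          = P a a + c * P a b + c * P b a + c^2 * P b b := by
      intro a b c
      rw [add_dotProduct, smul_dotProduct, Matrix.mulVec_add, Matrix.mulVec_smul,
        dotProduct_add, dotProduct_smul, dotProduct_add, dotProduct_smul,
        quad_single, quad_single, quad_single, quad_single]
      simp only [smul_eq_mul]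
      ring
    intro a _
    intro b _
    have hplus := hpsd.dotProduct_mulVec_nonneg (Pi.single a (1:ℝ) + (1:ℝ) • Pi.single (M := fun _ : Fin nP => ℝ) b 1)
    have hminus := hpsd.dotProduct_mulVec_nonneg (Pi.single a (1:ℝ) + (-1:ℝ) • Pi.single (M := fun _ : Fin nP => ℝ) b 1)
    rw [star_trivial, hexp a b 1] at hplus
    rw [star_trivial, hexp a b (-1)] at hminus
    have h1 := hdiag' a
    have h2 := hdiag' b
    constructor
    · nlinarith [hminus, hsymm a b]
    · nlinarith [hplus, hsymm a b]
  have hScomp : IsCompact S := by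
    have hKc : IsCompact (Set.univ.pi fun _ : Fin nP =>
        Set.univ.pi fun _ : Fin nP => Set.Icc (-(nP:ℝ)) nP : Set (Matrix (Fin nP) (Fin nP) ℝ)) :=
      isCompact_univ_pi fun _ => isCompact_univ_pi fun _ => isCompact_Icc
    have hSclosed : IsClosed S := by
      have h1 : IsClosed {P : Matrix (Fin nP) (Fin nP) ℝ | P.trace = (nP:ℝ)} :=
        isClosed_eq (continuous_id.matrix_trace) continuous_const
      have h2 : IsClosed {P : Matrix (Fin nP) (Fin nP) ℝ | P.PosSemidef} := by
        have hset : {P : Matrix (Fin nP) (Fin nP) ℝ | P.PosSemidef}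
            = {P : Matrix (Fin nP) (Fin nP) ℝ | Pᴴ = P}
              ∩ ⋂ v : Fin nP → ℝ, {P | 0 ≤ star v ⬝ᵥ P *ᵥ v} := by
          ext P
          simp only [Set.mem_setOf_eq, Set.mem_inter_iff, Set.mem_iInter]
          exact ⟨fun h => ⟨h.1, h.dotProduct_mulVec_nonneg⟩, fun h => .of_dotProduct_mulVec_nonneg h.1 h.2⟩
        rw [hset]
        refine IsClosed.inter (isClosed_eq (continuous_id.matrix_conjTranspose) continuous_id)
          (isClosed_iInter fun v => ?_)
        refine isClosed_le continuous_const ?_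
        show Continuous fun P : Matrix (Fin nP) (Fin nP) ℝ => ∑ a, star v a * ∑ b, P a b * v b
        exact continuous_finset_sum _ fun a _ => continuous_const.mul
          (continuous_finset_sum _ fun b _ =>
            (continuous_id.matrix_elem a b).mul continuous_const)
      exact (h1.inter h2)
    exact hKc.of_isClosed_subset hSclosed hSsub
  have hSconv : Convex ℝ S := by
    intro P hP Q hQ a b ha hb hab
    refine ⟨?_, (psd_smul hP.2 ha).add (psd_smul hQ.2 hb)⟩
    rw [Matrix.trace_add, Matrix.trace_smul, Matrix.trace_smul, hP.1, hQ.1]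
    simp only [smul_eq_mul]
    rw [← add_mul, hab, one_mul]
  exact minimax_aux hScomp hSconv hSne hAcomp hAconv hAne φ haff hcontP hcontA hconc
end Minimax
end

section
/- Let 𝒳 := {P ∈ S^{n_P} : trace(P) = n_P, P ⪰ 0}, 𝒴 ⊂ ℝ^m compact convex, OPT_A(P) := max_{α ∈ 𝒴} [⟨D(α), P⟩ + κ(α)] where D(α)_{ij} := ∑_{k,l=1}^m (α_k e_k) G_{ij}(x_k,x_l) (α_l e_l), G_{ij}(x,y) := ∫_Y N_i(z,x) N_j(z,y) dz, and κ is continuous concave. Suppose P_k ≻ 0 is such that α ↦ ⟨D(α),P_k⟩ + κ(α) is strictly concave on 𝒴 (so OPT_A(P_k) has a unique maximizer ᾱ). Then OPT_A is differentiable at P_k and argmin_{S ∈ 𝒳} ⟨∇OPT_A(P_k), S⟩ = argmin_{S ∈ 𝒳} ⟨D(ᾱ), S⟩; that is, the Frank–Wolfe linear minimization step at P_k coincides with the minimizers of OPT_P(ᾱ) := min_{P ∈ 𝒳} ⟨D(ᾱ),P⟩ evaluated at ᾱ = arg OPT_A(P_k). -/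
open MeasureTheory Matrix

attribute [local instance] Matrix.frobeniusNormedAddCommGroup Matrix.frobeniusNormedSpace

section Stmt5Aux

variable {nP : ℕ}

lemma stmt5_trace_transpose_mul (A B : Matrix (Fin nP) (Fin nP) ℝ) :
    (Aᵀ * B).trace = ∑ i, ∑ j, A i j * B i j := by
  simp only [Matrix.trace, Matrix.diag, Matrix.mul_apply, Matrix.transpose_apply]
  rw [Finset.sum_comm]

lemma stmt5_abs_entry_le (B : Matrix (Fin nP) (Fin nP) ℝ) (i j : Fin nP) :
    |B i j| ≤ ‖B‖ := by
  rw [Matrix.frobenius_norm_def]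
  have h0 : (0:ℝ) ≤ ‖B i j‖ ^ (2:ℝ) := Real.rpow_nonneg (norm_nonneg _) _
  have h1 : ‖B i j‖ ^ (2:ℝ) ≤ ∑ i', ∑ j', ‖B i' j'‖ ^ (2:ℝ) := by
    have hi : ‖B i j‖ ^ (2:ℝ) ≤ ∑ j', ‖B i j'‖ ^ (2:ℝ) :=
      Finset.single_le_sum (f := fun j' => ‖B i j'‖ ^ (2:ℝ))
        (fun k _ => Real.rpow_nonneg (norm_nonneg _) _) (Finset.mem_univ j)
    refine hi.trans (Finset.single_le_sum (f := fun i' => ∑ j', ‖B i' j'‖ ^ (2:ℝ))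
      (fun k _ => Finset.sum_nonneg fun l _ => Real.rpow_nonneg (norm_nonneg _) _)
      (Finset.mem_univ i))
  have h2 : (‖B i j‖ ^ (2:ℝ)) ^ (1/2:ℝ) ≤ (∑ i', ∑ j', ‖B i' j'‖ ^ (2:ℝ)) ^ (1/2:ℝ) :=
    Real.rpow_le_rpow h0 h1 (by norm_num)
  have h3 : (‖B i j‖ ^ (2:ℝ)) ^ (1/2:ℝ) = ‖B i j‖ := by
    rw [← Real.rpow_mul (norm_nonneg _)]; norm_num
  rw [← Real.norm_eq_abs, ← h3]; exact h2

lemma stmt5_abs_ip_le (A B : Matrix (Fin nP) (Fin nP) ℝ) :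
    |∑ i, ∑ j, A i j * B i j| ≤ (∑ i, ∑ j, |A i j|) * ‖B‖ := by
  calc |∑ i, ∑ j, A i j * B i j| ≤ ∑ i, ∑ j, |A i j * B i j| :=
        (Finset.abs_sum_le_sum_abs _ _).trans
          (Finset.sum_le_sum fun i _ => Finset.abs_sum_le_sum_abs _ _)
    _ ≤ ∑ i, ∑ j, |A i j| * ‖B‖ := by
        refine Finset.sum_le_sum fun i _ => Finset.sum_le_sum fun j _ => ?_
        rw [abs_mul]
        exact mul_le_mul_of_nonneg_left (stmt5_abs_entry_le B i j) (abs_nonneg _)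
    _ = (∑ i, ∑ j, |A i j|) * ‖B‖ := by rw [Finset.sum_mul]; simp [Finset.sum_mul]

end Stmt5Aux

/-- at a positive definite `P_k` where the inner problem is strictly concave (so has
a unique maximizer `ᾱ`), `OPT_A` is differentiable and the Frank–Wolfe linear minimization step
`argmin_{S ∈ 𝒳} ⟨∇OPT_A(P_k), S⟩` coincides with `argmin_{S ∈ 𝒳} ⟨D(ᾱ), S⟩`. -/
theorem stmt_5 {n p nP m : ℕ}
    (X : Set (Fin n → ℝ)) (Yint : Set (Fin p → ℝ))
    (hX : IsCompact X) (hY : IsCompact Yint)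
    (N : (Fin p → ℝ) → (Fin n → ℝ) → (Fin nP → ℝ))
    (hNmeas : ∀ x, Measurable fun z => N z x)
    (hNbdd : ∃ M, ∀ z x i, |N z x i| ≤ M)
    (x : Fin m → (Fin n → ℝ)) (hx : ∀ i, x i ∈ X) (e : Fin m → ℝ)
    (G : Fin nP → Fin nP → (Fin n → ℝ) → (Fin n → ℝ) → ℝ)
    (hG : ∀ i j u v, G i j u v = ∫ z in Yint, N z u i * N z v j)
    (D : (Fin m → ℝ) → Matrix (Fin nP) (Fin nP) ℝ)
    (hD : ∀ α i j, D α i j = ∑ k, ∑ l, (α k * e k) * G i j (x k) (x l) * (α l * e l))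
    (A : Set (Fin m → ℝ)) (hAcomp : IsCompact A) (hAconv : Convex ℝ A) (hAne : A.Nonempty)
    (κ : (Fin m → ℝ) → ℝ) (hκcont : Continuous κ) (hκconc : ConcaveOn ℝ Set.univ κ)
    (Xset : Set (Matrix (Fin nP) (Fin nP) ℝ))
    (hXset : Xset = {P | P.trace = (nP : ℝ) ∧ P.PosSemidef})
    (OPTA : Matrix (Fin nP) (Fin nP) ℝ → ℝ)
    (hOPTA : ∀ P, OPTA P = ⨆ α : A, (((D α.1)ᵀ * P).trace + κ α.1))
    (Pk : Matrix (Fin nP) (Fin nP) ℝ) (hPk : Pk.PosDef)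
    (hstrict : StrictConcaveOn ℝ A fun α => ((D α)ᵀ * Pk).trace + κ α) :
    ∃ abar ∈ A, IsMaxOn (fun α => ((D α)ᵀ * Pk).trace + κ α) A abar ∧
      ∃ L : Matrix (Fin nP) (Fin nP) ℝ →L[ℝ] ℝ,
        HasFDerivAt OPTA L Pk ∧
        {S | S ∈ Xset ∧ IsMinOn (fun T => L T) Xset S} =
        {S | S ∈ Xset ∧ IsMinOn (fun T => ((D abar)ᵀ * T).trace) Xset S} := by
  classical
  haveI : Nonempty A := hAne.to_subtype
  -- the payoff function
  set f : (Fin m → ℝ) → Matrix (Fin nP) (Fin nP) ℝ → ℝ :=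
    fun α P => ((D α)ᵀ * P).trace + κ α with hf
  -- continuity of entries of D
  have hDc : ∀ i j, Continuous fun α : Fin m → ℝ => D α i j := by
    intro i j
    have h : (fun α : Fin m → ℝ => D α i j)
        = fun α => ∑ k, ∑ l, (α k * e k) * G i j (x k) (x l) * (α l * e l) :=
      funext fun α => hD α i j
    rw [h]
    exact continuous_finset_sum _ fun k _ => continuous_finset_sum _ fun l _ => by
      exact (((continuous_apply k).mul continuous_const).mul continuous_const).mul
        ((continuous_apply l).mul continuous_const)
  -- continuity in α of the payoff
  have htr : ∀ P, Continuous fun α : Fin m → ℝ => f α P := by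
    intro P
    have h : (fun α : Fin m → ℝ => f α P)
        = fun α => (∑ i, ∑ j, D α i j * P i j) + κ α := by
      funext α; rw [hf]; simp only [stmt5_trace_transpose_mul]
    rw [h]
    exact ((continuous_finset_sum _ fun i _ => continuous_finset_sum _ fun j _ =>
      (hDc i j).mul continuous_const)).add hκcont
  -- the maximizer at Pk
  obtain ⟨abar, habarA, habarMax⟩ := hAcomp.exists_isMaxOn hAne (htr Pk).continuousOn
  -- strict uniqueness
  have huniq : ∀ β ∈ A, β ≠ abar → f β Pk < f abar Pk := by
    intro β hβ hne
    have hle : f β Pk ≤ f abar Pk := habarMax hβ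
    rcases lt_or_eq_of_le hle with h | h
    · exact h
    · exfalso
      have hmid := hstrict.2 hβ habarA hne (by norm_num : (0:ℝ) < 1/2)
        (by norm_num : (0:ℝ) < 1/2) (by norm_num)
      have hmem : (1/2 : ℝ) • β + (1/2 : ℝ) • abar ∈ A :=
        hAconv hβ habarA (by norm_num) (by norm_num) (by norm_num)
      have hle2 : f ((1/2 : ℝ) • β + (1/2 : ℝ) • abar) Pk ≤ f abar Pk := habarMax hmem
      have hmid' : (1/2:ℝ) * f β Pk + (1/2:ℝ) * f abar Pk
          < f ((1/2:ℝ) • β + (1/2:ℝ) • abar) Pk := by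
        simpa [smul_eq_mul] using hmid
      rw [h] at hmid'
      linarith [hmid', hle2]
  -- bounded above ranges / sup attained
  have hbdd : ∀ P, BddAbove (Set.range fun α : A => f α.1 P) := by
    intro P
    have h := (hAcomp.image_of_continuousOn (htr P).continuousOn).bddAbove
    rwa [Set.image_eq_range] at h
  have hOPTA' : ∀ P, OPTA P = ⨆ α : A, f α.1 P := hOPTA
  have hge : ∀ P, ∀ β ∈ A, f β P ≤ OPTA P := by
    intro P β hβ
    rw [hOPTA' P]
    exact le_ciSup (hbdd P) (⟨β, hβ⟩ : A)
  have hmax_eq : ∀ P β, β ∈ A → IsMaxOn (fun α => f α P) A β → OPTA P = f β P := by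
    intro P β hβ hmaxβ
    refine le_antisymm ?_ (hge P β hβ)
    rw [hOPTA' P]
    exact ciSup_le fun α => hmaxβ α.2
  -- linearity in P
  have hlin : ∀ α (P Q : Matrix (Fin nP) (Fin nP) ℝ),
      f α P - f α Q = ∑ i, ∑ j, D α i j * (P - Q) i j := by
    intro α P Q
    have h : ∑ i, ∑ j, D α i j * (P - Q) i j
        = (∑ i, ∑ j, D α i j * P i j) - ∑ i, ∑ j, D α i j * Q i j := by
      simp [Matrix.sub_apply, mul_sub, Finset.sum_sub_distrib]
    rw [h, hf]
    simp only [stmt5_trace_transpose_mul]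
    ring
  -- Sbar and SD
  set Sbar : (Fin m → ℝ) → ℝ := fun α => ∑ i, ∑ j, |D α i j - D abar i j| with hSbar
  set SD : (Fin m → ℝ) → ℝ := fun α => ∑ i, ∑ j, |D α i j| with hSD
  have hSbarc : Continuous Sbar := continuous_finset_sum _ fun i _ =>
    continuous_finset_sum _ fun j _ => ((hDc i j).sub continuous_const).abs
  have hSDc : Continuous SD := continuous_finset_sum _ fun i _ =>
    continuous_finset_sum _ fun j _ => (hDc i j).abs
  have hSbar0 : Sbar abar = 0 := by
    rw [hSbar]; simp
  have hSbarNN : ∀ α, 0 ≤ Sbar α := fun α =>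
    Finset.sum_nonneg fun i _ => Finset.sum_nonneg fun j _ => abs_nonneg _
  -- uniform bound M for SD on A
  obtain ⟨αM, hαMA, hαMmax⟩ := hAcomp.exists_isMaxOn hAne hSDc.continuousOn
  set M : ℝ := SD αM with hM
  have hMbd : ∀ α ∈ A, SD α ≤ M := fun α hα => hαMmax hα
  have hM0 : 0 ≤ M := by
    rw [hM, hSD]
    exact Finset.sum_nonneg fun i _ => Finset.sum_nonneg fun j _ => abs_nonneg _
  -- uniform payoff perturbation bound
  have hpert : ∀ α ∈ A, ∀ P Q : Matrix (Fin nP) (Fin nP) ℝ,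
      |f α P - f α Q| ≤ M * ‖P - Q‖ := by
    intro α hα P Q
    rw [hlin α P Q]
    refine (stmt5_abs_ip_le (D α) (P - Q)).trans ?_
    exact mul_le_mul_of_nonneg_right (hMbd α hα) (norm_nonneg _)
  -- KEY CLAIM: near Pk, every maximizer β has small Sbar β
  have claim : ∀ ε > (0:ℝ), ∃ δ > (0:ℝ), ∀ P : Matrix (Fin nP) (Fin nP) ℝ,
      ‖P - Pk‖ < δ → ∀ β ∈ A, IsMaxOn (fun α => f α P) A β → Sbar β < ε := by
    intro ε hε
    by_cases hK : ∃ β ∈ A, ε ≤ Sbar β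
    · set K : Set (Fin m → ℝ) := A ∩ {β | ε ≤ Sbar β} with hKdef
      have hKcomp : IsCompact K :=
        hAcomp.inter_right (isClosed_le continuous_const hSbarc)
      have hKne : K.Nonempty := by
        obtain ⟨β, hβ, hβ2⟩ := hK; exact ⟨β, hβ, hβ2⟩
      obtain ⟨β0, hβ0K, hβ0max⟩ := hKcomp.exists_isMaxOn hKne (htr Pk).continuousOn
      have hβ0A : β0 ∈ A := hβ0K.1
      have hβ0ne : β0 ≠ abar := by
        intro h
        have h2 : ε ≤ Sbar β0 := hβ0K.2
        rw [h, hSbar0] at h2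
        exact absurd (lt_of_lt_of_le hε h2) (lt_irrefl 0)
      set c : ℝ := f abar Pk - f β0 Pk with hc
      have hcpos : 0 < c := sub_pos.2 (huniq β0 hβ0A hβ0ne)
      refine ⟨c / (3 * (M + 1)), by positivity, ?_⟩
      intro P hP β hβA hβmax
      by_contra hcon
      push_neg at hcon
      have hβK : β ∈ K := ⟨hβA, hcon⟩
      have hMδ : M * ‖P - Pk‖ ≤ c / 3 := by
        have h1 : M * ‖P - Pk‖ ≤ (M + 1) * (c / (3 * (M + 1))) := by
          apply mul_le_mul (by linarith) hP.le (norm_nonneg _) (by linarith)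
        have h2 : (M + 1) * (c / (3 * (M + 1))) = c / 3 := by
          field_simp
        linarith [h1, h2.le]
      have hb1 := abs_le.1 (hpert β hβA P Pk)
      have hb2 := abs_le.1 (hpert abar habarA P Pk)
      have h3 : f β Pk ≤ f β0 Pk := hβ0max hβK
      have h4 : f abar P ≤ f β P := hβmax habarA
      have hcc : f β0 Pk = f abar Pk - c := by rw [hc]; ring
      linarith [hb1.1, hb1.2, hb2.1, hb2.2]
    · push_neg at hK
      exact ⟨1, one_pos, fun P _ β hβ _ => hK β hβ⟩
  -- the linear map L
  set lmap : Matrix (Fin nP) (Fin nP) ℝ →ₗ[ℝ] ℝ :=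
    { toFun := fun T => ((D abar)ᵀ * T).trace
      map_add' := fun T T' => by simp [Matrix.mul_add]
      map_smul' := fun c T => by simp [Matrix.mul_smul] } with hlmap
  set L : Matrix (Fin nP) (Fin nP) ℝ →L[ℝ] ℝ := LinearMap.toContinuousLinearMap lmap with hL
  have hLval : ∀ T, L T = ((D abar)ᵀ * T).trace := fun T => rfl
  refine ⟨abar, habarA, habarMax, L, ?_, rfl⟩
  -- differentiability
  refine (hasFDerivAt_iff_isLittleO_nhds_zero (f := OPTA) (f' := L) (x := Pk)).2 ?_
  rw [Asymptotics.isLittleO_iff]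
  intro ε hε
  obtain ⟨δ, hδ, hδP⟩ := claim ε hε
  rw [Metric.eventually_nhds_iff]
  refine ⟨δ, hδ, ?_⟩
  intro H hH
  rw [dist_zero_right] at hH
  have hnorm : ‖Pk + H - Pk‖ < δ := by
    have : Pk + H - Pk = H := by abel
    rw [this]; exact hH
  obtain ⟨β, hβA, hβmax⟩ := hAcomp.exists_isMaxOn hAne (htr (Pk + H)).continuousOn
  have hSb : Sbar β < ε := hδP (Pk + H) hnorm β hβA hβmax
  have e1 : OPTA (Pk + H) = f β (Pk + H) := hmax_eq (Pk + H) β hβA hβmax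
  have e2 : OPTA Pk = f abar Pk := hmax_eq Pk abar habarA habarMax
  have hLH : L H = ∑ i, ∑ j, D abar i j * H i j := by
    rw [hLval, stmt5_trace_transpose_mul]
  have hPH : Pk + H - Pk = H := by abel
  -- lower bound
  have hlow : 0 ≤ OPTA (Pk + H) - OPTA Pk - L H := by
    have h1 : f abar (Pk + H) ≤ OPTA (Pk + H) := hge _ abar habarA
    have h2 : f abar (Pk + H) - f abar Pk = L H := by
      rw [hlin abar (Pk + H) Pk, hPH, hLH]
    linarith [h1, h2, e2.le]
  -- upper bound
  have hup : OPTA (Pk + H) - OPTA Pk - L H ≤ Sbar β * ‖H‖ := by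
    have h1 : f β Pk ≤ OPTA Pk := hge Pk β hβA
    have h2 : f β (Pk + H) - f β Pk = ∑ i, ∑ j, D β i j * H i j := by
      rw [hlin β (Pk + H) Pk, hPH]
    have h3 : (∑ i, ∑ j, D β i j * H i j) - (∑ i, ∑ j, D abar i j * H i j)
        = ∑ i, ∑ j, (D β - D abar) i j * H i j := by
      simp [Matrix.sub_apply, sub_mul, Finset.sum_sub_distrib]
    have h4 : |∑ i, ∑ j, (D β - D abar) i j * H i j| ≤ Sbar β * ‖H‖ := by
      refine (stmt5_abs_ip_le (D β - D abar) H).trans ?_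
      apply le_of_eq
      congr 1
    have h5 := (abs_le.1 h4).2
    rw [e1, hLH]
    linarith [h1, h2, h3, h5]
  have hfin : Sbar β * ‖H‖ ≤ ε * ‖H‖ :=
    mul_le_mul_of_nonneg_right hSb.le (norm_nonneg _)
  rw [Real.norm_eq_abs]
  refine (abs_of_nonneg hlow).le.trans ?_
  calc OPTA (Pk + H) - OPTA Pk - L H ≤ Sbar β * ‖H‖ := hup
    _ ≤ ε * ‖H‖ := hfin
    _ = ε * ‖H‖ := rfl
end

section
/- (Pointwise density of Tessellated Kernels) Let X = [a,b] ⊂ ℝ^n and Y = [a−δ, b+δ] with δ > 0. For d ∈ ℕ let Z_d(z,x) denote the vector of all monomials in (z,x) ∈ ℝ^{2n} of degree at most d, let 𝟙(z) = 1 if z ≥ 0 componentwise and 0 otherwise, and let N_T^d(z,x) := [Z_d(z,x)𝟙(z−x); Z_d(z,x)(1−𝟙(z−x))]. Then for every positive semidefinite matrix K* ∈ S^m and every finite set of distinct points {x_i}_{i=1}^m ⊂ X, there exist d ∈ ℕ and a positive semidefinite matrix P such that the kernel k(x,y) := ∫_Y N_T^d(z,x)ᵀ P N_T^d(z,y) dz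 satisfies k(x_i,x_j) = K*_{ij} for all i,j ∈ {1,…,m}. -/
open MeasureTheory Matrix


private lemma psd_smul_aux {k : Type*} [Fintype k] {A : Matrix k k ℝ} (hA : A.PosSemidef)
    {c : ℝ} (hc : 0 ≤ c) : (c • A).PosSemidef := by
  constructor
  · rw [Matrix.IsHermitian, Matrix.conjTranspose_smul, star_trivial, hA.1]
  · intro v
    exact (hA.smul hc).2 v

private lemma interp_exists {n m : ℕ} (x : Fin m → (Fin n → ℝ)) (hdist : Function.Injective x) :
    ∃ p : Fin m → MvPolynomial (Fin n) ℝ,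
      (∀ i, (p i).totalDegree ≤ m) ∧
      (∀ i k, MvPolynomial.eval (x k) (p i) = if i = k then 1 else 0) := by
  classical
  set g : Fin m → Fin m → ℝ := fun i j => ∑ l, (x i l - x j l) ^ 2 with hg
  have hgpos : ∀ i j, j ≠ i → 0 < g i j := by
    intro i j hij
    have hne : x i ≠ x j := fun h => hij (hdist h).symm
    obtain ⟨l, hl⟩ : ∃ l, x i l ≠ x j l := by
      by_contra h; push_neg at h; exact hne (funext h)
    have hl' : x i l - x j l ≠ 0 := sub_ne_zero.mpr hl
    refine Finset.sum_pos' (fun l _ => sq_nonneg _) ⟨l, Finset.mem_univ _, ?_⟩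
    rw [← sq_abs]
    exact pow_pos (abs_pos.mpr hl') 2
  set q : Fin m → Fin m → MvPolynomial (Fin n) ℝ := fun i j =>
    MvPolynomial.C (g i j)⁻¹ *
      ((∑ l, MvPolynomial.C (x i l - x j l) * MvPolynomial.X l) +
        MvPolynomial.C (- ∑ l, x j l * (x i l - x j l))) with hq
  have hqeval : ∀ i j y, MvPolynomial.eval y (q i j) =
      (g i j)⁻¹ * ∑ l, (y l - x j l) * (x i l - x j l) := by
    intro i j y
    simp only [hq, _root_.map_mul, map_add, map_sum, MvPolynomial.eval_C, MvPolynomial.eval_X, map_neg]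
    congr 1
    rw [← sub_eq_add_neg, ← Finset.sum_sub_distrib]
    exact Finset.sum_congr rfl fun l _ => by ring
  have hqdeg : ∀ i j, (q i j).totalDegree ≤ 1 := by
    intro i j
    refine (MvPolynomial.totalDegree_mul _ _).trans ?_
    rw [MvPolynomial.totalDegree_C, zero_add]
    refine (MvPolynomial.totalDegree_add _ _).trans (max_le ?_ ?_)
    · refine (MvPolynomial.totalDegree_finset_sum _ _).trans (Finset.sup_le fun l _ => ?_)
      refine (MvPolynomial.totalDegree_mul _ _).trans ?_
      rw [MvPolynomial.totalDegree_C, MvPolynomial.totalDegree_X]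
    · rw [MvPolynomial.totalDegree_C]; omega
  refine ⟨fun i => ∏ j ∈ Finset.univ.erase i, q i j, fun i => ?_, fun i k => ?_⟩
  · refine (MvPolynomial.totalDegree_finset_prod _ _).trans ?_
    calc ∑ j ∈ Finset.univ.erase i, (q i j).totalDegree
        ≤ ∑ j ∈ Finset.univ.erase i, 1 := Finset.sum_le_sum fun j _ => hqdeg i j
      _ ≤ ∑ j : Fin m, 1 := Finset.sum_le_sum_of_subset (Finset.subset_univ _)
      _ = m := by simp
  · rw [map_prod]
    by_cases hik : i = k
    · subst hik
      simp only [if_pos rfl]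
      refine Finset.prod_eq_one fun j hj => ?_
      rw [hqeval]
      have hj' : j ≠ i := (Finset.mem_erase.mp hj).1
      have : ∑ l, (x i l - x j l) * (x i l - x j l) = g i j :=
        Finset.sum_congr rfl fun l _ => by ring
      rw [this]
      exact inv_mul_cancel₀ (hgpos i j hj').ne'
    · rw [if_neg hik]
      refine Finset.prod_eq_zero (Finset.mem_erase.mpr ⟨fun h => hik h.symm, Finset.mem_univ _⟩) ?_
      rw [hqeval]
      have : ∑ l, (x k l - x k l) * (x i l - x k l) = 0 := by simp
      rw [this, mul_zero]


/-- pointwise density of Tessellated Kernels: for every PSD matrix `K⋆` and every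
finite set of distinct points in `X = [a,b]`, there are a degree `d` and a PSD matrix `P` such
that the Tessellated Kernel defined by `P` interpolates `K⋆` at those points. -/
theorem stmt_9 {n m : ℕ}
    (a b δ : Fin n → ℝ) (hab : ∀ i, a i < b i) (hδ : ∀ i, 0 < δ i)
    (Kstar : Matrix (Fin m) (Fin m) ℝ) (hK : Kstar.PosSemidef)
    (x : Fin m → (Fin n → ℝ)) (hx : ∀ i, x i ∈ Set.Icc a b)
    (hdist : Function.Injective x) :
    ∃ (d nb : ℕ) (η : Fin nb → (Fin n → ℕ) × (Fin n → ℕ)),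
      -- `η` enumerates (injectively and exhaustively) all monomials in `(z,x)` of degree ≤ d
      Function.Injective η ∧
      (∀ q : (Fin n → ℕ) × (Fin n → ℕ),
        ((∑ i, q.1 i) + (∑ i, q.2 i) ≤ d ↔ ∃ s, η s = q)) ∧
      ∃ NT : (Fin n → ℝ) → (Fin n → ℝ) → (Fin nb ⊕ Fin nb) → ℝ,
        (∀ z y, NT z y = Sum.elim
          (fun t => ((∏ l, z l ^ (η t).1 l) * (∏ l, y l ^ (η t).2 l)) *
            Set.indicator {w : Fin n → ℝ | ∀ l, 0 ≤ w l} 1 (z - y))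
          (fun t => ((∏ l, z l ^ (η t).1 l) * (∏ l, y l ^ (η t).2 l)) *
            (1 - Set.indicator {w : Fin n → ℝ | ∀ l, 0 ≤ w l} 1 (z - y)))) ∧
        ∃ P : Matrix (Fin nb ⊕ Fin nb) (Fin nb ⊕ Fin nb) ℝ, P.PosSemidef ∧
          ∀ i j : Fin m,
            (∫ z in Set.Icc (a - δ) (b + δ), NT z (x i) ⬝ᵥ P.mulVec (NT z (x j))) =
              Kstar i j := by
  classical
  obtain ⟨p, hpdeg, hpeval⟩ := interp_exists x hdist
  set T : Finset (Fin n → ℕ) := Fintype.piFinset (fun _ => Finset.range (m + 1)) with hT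
  set S : Finset ((Fin n → ℕ) × (Fin n → ℕ)) :=
    (T ×ˢ T).filter (fun q => (∑ i, q.1 i) + (∑ i, q.2 i) ≤ m) with hS
  have hTmem : ∀ e : Fin n → ℕ, (∑ i, e i) ≤ m → e ∈ T := by
    intro e he
    rw [hT, Fintype.mem_piFinset]
    intro l
    rw [Finset.mem_range]
    have : e l ≤ ∑ i, e i := Finset.single_le_sum (fun i _ => Nat.zero_le _) (Finset.mem_univ l)
    omega
  have hSmem : ∀ q : (Fin n → ℕ) × (Fin n → ℕ),
      q ∈ S ↔ (∑ i, q.1 i) + (∑ i, q.2 i) ≤ m := by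
    intro q
    rw [hS, Finset.mem_filter]
    exact ⟨fun h => h.2, fun h =>
      ⟨Finset.mem_product.mpr ⟨hTmem _ (by omega), hTmem _ (by omega)⟩, h⟩⟩
  set nb := S.card with hnb
  set η : Fin nb → (Fin n → ℕ) × (Fin n → ℕ) := fun t => (S.equivFin.symm t : S) with hη
  have hηmem : ∀ t, η t ∈ S := fun t => (S.equivFin.symm t).2
  have hηinj : Function.Injective η :=
    Subtype.val_injective.comp S.equivFin.symm.injective
  refine ⟨m, nb, η, hηinj, ?_, ?_⟩
  · intro q
    constructor
    · intro h
      exact ⟨S.equivFin ⟨q, (hSmem q).mpr h⟩, by simp [hη]⟩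
    · rintro ⟨s, rfl⟩
      exact (hSmem _).mp (hηmem s)
  set NT : (Fin n → ℝ) → (Fin n → ℝ) → (Fin nb ⊕ Fin nb) → ℝ := fun z y => Sum.elim
      (fun t => ((∏ l, z l ^ (η t).1 l) * (∏ l, y l ^ (η t).2 l)) *
        Set.indicator {w : Fin n → ℝ | ∀ l, 0 ≤ w l} 1 (z - y))
      (fun t => ((∏ l, z l ^ (η t).1 l) * (∏ l, y l ^ (η t).2 l)) *
        (1 - Set.indicator {w : Fin n → ℝ | ∀ l, 0 ≤ w l} 1 (z - y))) with hNT
  refine ⟨NT, fun z y => rfl, ?_⟩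
  -- coefficient vectors of the interpolation polynomials
  set u : Fin m → Fin nb → ℝ := fun i t =>
    if (η t).1 = 0 then MvPolynomial.coeff (Finsupp.equivFunOnFinite.symm ((η t).2)) (p i)
    else 0 with hu_def
  have hexp : ∀ (i : Fin m) (y : Fin n → ℝ),
      ∑ t, u i t * ∏ l, y l ^ (η t).2 l = MvPolynomial.eval y (p i) := by
    intro i y
    set F : (Fin n → ℕ) × (Fin n → ℕ) → ℝ := fun q =>
      (if q.1 = 0 then MvPolynomial.coeff (Finsupp.equivFunOnFinite.symm q.2) (p i) else 0) *
        ∏ l, y l ^ q.2 l with hF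
    set E : Finset (Fin n → ℕ) := T.filter (fun e => (∑ i, e i) ≤ m) with hE
    calc ∑ t, u i t * ∏ l, y l ^ (η t).2 l
        = ∑ s : {q // q ∈ S}, F s.val := Equiv.sum_comp S.equivFin.symm (fun s => F s.val)
      _ = ∑ q ∈ S, F q := Finset.sum_coe_sort S F
      _ = ∑ q ∈ S.filter (fun q => q.1 = 0),
            MvPolynomial.coeff (Finsupp.equivFunOnFinite.symm q.2) (p i) * ∏ l, y l ^ q.2 l := by
          conv_rhs => rw [Finset.sum_filter]
          refine Finset.sum_congr rfl fun q _ => ?_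
          by_cases h : q.1 = 0 <;> simp [hF, h]
      _ = ∑ e ∈ E, MvPolynomial.coeff (Finsupp.equivFunOnFinite.symm e) (p i) * ∏ l, y l ^ e l := by
          refine Finset.sum_nbij' (fun q => q.2) (fun e => ((0 : Fin n → ℕ), e)) ?_ ?_ ?_ ?_ ?_
          · intro q hq
            obtain ⟨hqS, hq0⟩ := Finset.mem_filter.mp hq
            have h2 := (hSmem q).mp hqS
            rw [hE, Finset.mem_filter]
            have hzero : (∑ i, q.1 i) = 0 := by simp [hq0]
            refine ⟨hTmem _ ?_, ?_⟩ <;> · show (∑ i, q.2 i) ≤ m; omega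
          · intro e he
            obtain ⟨heT, heSum⟩ := Finset.mem_filter.mp (hE ▸ he)
            refine Finset.mem_filter.mpr ⟨(hSmem _).mpr ?_, rfl⟩
            simpa using heSum
          · intro q hq
            obtain ⟨hqS, hq0⟩ := Finset.mem_filter.mp hq
            exact Prod.ext (by simp [hq0]) rfl
          · intro e he; rfl
          · intro q hq; rfl
      _ = ∑ μ ∈ E.image (Finsupp.equivFunOnFinite.symm),
            MvPolynomial.coeff μ (p i) * ∏ l, y l ^ μ l := by
          refine Finset.sum_nbij' (fun e => (Finsupp.equivFunOnFinite.symm e : Fin n →₀ ℕ))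
            (fun μ => ⇑μ) ?_ ?_ ?_ ?_ ?_
          · intro e he; exact Finset.mem_image_of_mem _ he
          · intro μ hμ
            obtain ⟨e, he, rfl⟩ := Finset.mem_image.mp hμ
            simpa using he
          · intro e he; rfl
          · intro μ hμ
            obtain ⟨e, he, rfl⟩ := Finset.mem_image.mp hμ
            simp
          · intro e he; simp
      _ = MvPolynomial.eval y (p i) := by
          rw [MvPolynomial.eval_eq']
          refine (Finset.sum_subset ?_ ?_).symm
          · intro μ hμ
            have hdeg : (μ.sum fun _ e => e) ≤ m :=
              le_trans (MvPolynomial.le_totalDegree hμ) (hpdeg i)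
            have h2 : (μ.sum fun _ e => e) = ∑ l, μ l :=
              Finsupp.sum_fintype _ _ (fun _ => rfl)
            have hsum : (∑ l, μ l) ≤ m := by omega
            refine Finset.mem_image.mpr ⟨⇑μ, ?_, Finsupp.equivFunOnFinite_symm_coe μ⟩
            rw [hE, Finset.mem_filter]
            exact ⟨hTmem _ hsum, hsum⟩
          · intro μ _ hμ
            rw [MvPolynomial.notMem_support_iff.mp hμ, zero_mul]
  have hu : ∀ i k, ∑ t, u i t * ∏ l, (x k) l ^ (η t).2 l = if i = k then 1 else 0 := by
    intro i k; rw [hexp, hpeval]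
  have huz : ∀ (i : Fin m) (z y : Fin n → ℝ),
      ∑ t, u i t * ((∏ l, z l ^ (η t).1 l) * (∏ l, y l ^ (η t).2 l)) =
        ∑ t, u i t * ∏ l, y l ^ (η t).2 l := by
    intro i z y
    refine Finset.sum_congr rfl fun t _ => ?_
    by_cases h : (η t).1 = 0
    · simp [h]
    · simp only [hu_def, if_neg h, zero_mul]
  set V : ℝ := ∏ l, ((b l + δ l) - (a l - δ l)) with hVdef
  have hV : 0 < V := Finset.prod_pos fun l _ => by have := hab l; have := hδ l; linarith
  set C : Matrix (Fin m) (Fin nb ⊕ Fin nb) ℝ :=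
    Matrix.of fun i s => Sum.elim (u i) (u i) s with hC
  refine ⟨Cᴴ * (V⁻¹ • Kstar) * C,
    (psd_smul_aux hK (inv_nonneg.mpr hV.le)).conjTranspose_mul_mul_same C, ?_⟩
  have hCmul : ∀ (k : Fin m) (z : Fin n → ℝ),
      C.mulVec (NT z (x k)) = fun i' => if i' = k then 1 else 0 := by
    intro k z
    funext i'
    show ∑ s, C i' s * NT z (x k) s = _
    rw [Fintype.sum_sum_type, ← Finset.sum_add_distrib]
    have hterm : ∀ t, C i' (Sum.inl t) * NT z (x k) (Sum.inl t) +
        C i' (Sum.inr t) * NT z (x k) (Sum.inr t) =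
        u i' t * ((∏ l, z l ^ (η t).1 l) * (∏ l, (x k) l ^ (η t).2 l)) := by
      intro t
      show u i' t * (((∏ l, z l ^ (η t).1 l) * (∏ l, (x k) l ^ (η t).2 l)) *
          Set.indicator {w : Fin n → ℝ | ∀ l, 0 ≤ w l} 1 (z - x k)) +
        u i' t * (((∏ l, z l ^ (η t).1 l) * (∏ l, (x k) l ^ (η t).2 l)) *
          (1 - Set.indicator {w : Fin n → ℝ | ∀ l, 0 ≤ w l} 1 (z - x k))) = _
      ring
    rw [Finset.sum_congr rfl (fun t _ => hterm t), huz, hu]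
  intro i j
  have hint : ∀ z : Fin n → ℝ,
      NT z (x i) ⬝ᵥ (Cᴴ * (V⁻¹ • Kstar) * C).mulVec (NT z (x j)) = V⁻¹ * Kstar i j := by
    intro z
    rw [← Matrix.mulVec_mulVec, ← Matrix.mulVec_mulVec, Matrix.dotProduct_mulVec]
    have hvm : NT z (x i) ᵥ* Cᴴ = C.mulVec (NT z (x i)) := by
      rw [Matrix.vecMul_conjTranspose]
      simp
    rw [hvm, hCmul, hCmul]
    simp [Matrix.mulVec, dotProduct, ite_mul, mul_ite, Matrix.smul_apply, smul_eq_mul,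
      Finset.sum_ite_eq', Finset.sum_ite_eq]
  calc (∫ z in Set.Icc (a - δ) (b + δ), NT z (x i) ⬝ᵥ (Cᴴ * (V⁻¹ • Kstar) * C).mulVec (NT z (x j)))
      = ∫ _z in Set.Icc (a - δ) (b + δ), V⁻¹ * Kstar i j := by simp only [hint]
    _ = (volume (Set.Icc (a - δ) (b + δ))).toReal • (V⁻¹ * Kstar i j) := setIntegral_const _
    _ = Kstar i j := by
        have hle : a - δ ≤ b + δ := fun l => by
          have h1 := hab l; have h2 := hδ l
          simp only [Pi.sub_apply, Pi.add_apply]; linarith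
        rw [Real.volume_Icc_pi_toReal hle, smul_eq_mul]
        have hprod : (∏ l, ((b + δ) l - (a - δ) l)) = V := by
          rw [hVdef]; exact Finset.prod_congr rfl fun l _ => by simp
        rw [hprod, ← mul_assoc, mul_inv_cancel₀ hV.ne', one_mul]
end

section
/- Let a, b, δ ∈ ℝ^n with a < b and δ > 0 componentwise, and set X := [a,b]. Then the kernel k : X × X → ℝ defined by k(x,y) := ∏_{i=1}^n (b_i + δ_i − max{x_i, y_i}) is universal on X: k is continuous and the linear span of the functions {x ↦ k(x,y) : y ∈ X} is dense in C(X) with the uniform norm. -/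
noncomputable section StmtTen

private def pp (s : ℝ) : ℝ := max s 0

private def tau (A h : ℝ) (q : ℕ) : ℝ := A + ((q : ℝ) - 1) * h

private def hat (A h t : ℝ) (p : ℕ) : ℝ :=
  (pp (t - tau A h p) - 2 * pp (t - tau A h (p + 1)) + pp (t - tau A h (p + 2))) / h

private def rmp (C u t : ℝ) : ℝ := C - max t u

private lemma pp_of_nonneg {s : ℝ} (hs : 0 ≤ s) : pp s = s := max_eq_left hs
private lemma pp_of_nonpos {s : ℝ} (hs : s ≤ 0) : pp s = 0 := max_eq_right hs

private lemma tau_eq (A h : ℝ) (q : ℕ) : tau A h q = A + ((q : ℝ) - 1) * h := rfl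

private lemma tau_succ (A h : ℝ) (q : ℕ) : tau A h (q + 1) = tau A h q + h := by
  rw [tau_eq, tau_eq]; push_cast; ring

private lemma hat_sum (A h t : ℝ) (m : ℕ) (hh : 0 < h) (ht1 : A ≤ t)
    (ht2 : t ≤ A + m * h) :
    ∑ p ∈ Finset.range (m + 1), hat A h t p = 1 := by
  have key := Finset.sum_range_sub' (fun p => pp (t - tau A h p) - pp (t - tau A h (p + 1))) (m + 1)
  have e0 : tau A h 0 = A - h := by rw [tau_eq]; push_cast; ring
  have e1 : tau A h 1 = A := by rw [tau_eq]; push_cast; ring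
  have em1 : tau A h (m + 1) = A + m * h := by rw [tau_eq]; push_cast; ring
  have em2 : tau A h (m + 2) = A + m * h + h := by rw [tau_eq]; push_cast; ring
  have v0 : pp (t - tau A h 0) = t - A + h := by
    rw [e0, pp_of_nonneg (by linarith)]; ring
  have v1 : pp (t - tau A h 1) = t - A := by rw [e1, pp_of_nonneg (by linarith)]
  have vm1 : pp (t - tau A h (m + 1)) = 0 := by rw [em1, pp_of_nonpos (by linarith)]
  have vm2 : pp (t - tau A h (m + 2)) = 0 := by rw [em2, pp_of_nonpos (by linarith)]
  have step : ∑ p ∈ Finset.range (m + 1), hat A h t p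
      = ∑ p ∈ Finset.range (m + 1),
          ((fun p => pp (t - tau A h p) - pp (t - tau A h (p + 1))) p
            - (fun p => pp (t - tau A h p) - pp (t - tau A h (p + 1))) (p + 1)) / h := by
    refine Finset.sum_congr rfl fun p _ => ?_
    simp only [hat]; ring_nf
  rw [step, ← Finset.sum_div, key]
  norm_num
  rw [v0, v1, vm1, vm2]
  field_simp
  ring

private lemma hat_nonneg (A h t : ℝ) (p : ℕ) (hh : 0 < h) : 0 ≤ hat A h t p := by
  apply div_nonneg _ hh.le
  have h1 : tau A h p = tau A h (p + 1) - h := by rw [tau_succ]; ring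
  have h2 : tau A h (p + 2) = tau A h (p + 1) + h := by
    have := tau_succ A h (p + 1); simpa using this
  set x := t - tau A h (p + 1) with hx
  have e1 : t - tau A h p = x + h := by rw [h1]; ring
  have e2 : t - tau A h (p + 2) = x - h := by rw [h2]; ring
  rw [e1, e2]
  rcases le_total x 0 with hx0 | hx0
  · rw [pp_of_nonpos hx0]
    have h3 := le_max_right (x + h) (0 : ℝ)
    have h4 := le_max_right (x - h) (0 : ℝ)
    unfold pp; linarith
  · rw [pp_of_nonneg hx0, pp_of_nonneg (by linarith : (0:ℝ) ≤ x + h)]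
    have h3 := le_max_left (x - h) (0 : ℝ)
    unfold pp; linarith

private lemma hat_support (A h t : ℝ) (p : ℕ) (hh : 0 < h)
    (hne : hat A h t p ≠ 0) : |t - tau A h (p + 1)| < h := by
  by_contra hcon
  push_neg at hcon
  apply hne
  have h1 : tau A h p = tau A h (p + 1) - h := by rw [tau_succ]; ring
  have h2 : tau A h (p + 2) = tau A h (p + 1) + h := by
    have := tau_succ A h (p + 1); simpa using this
  rcases le_abs.mp hcon with hc | hc
  · have ht : tau A h (p + 1) + h ≤ t := by linarith
    unfold hat
    rw [pp_of_nonneg (by rw [h1]; linarith), pp_of_nonneg (by linarith),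
      pp_of_nonneg (by rw [h2]; linarith), h1, h2]
    ring_nf
  · have ht : t ≤ tau A h (p + 1) - h := by linarith
    unfold hat
    rw [pp_of_nonpos (by rw [h1]; linarith), pp_of_nonpos (by linarith),
      pp_of_nonpos (by rw [h2]; linarith)]
    simp

private lemma pp_repr (A B C Δ h : ℝ) (m : ℕ) (hh : 0 < h) (hΔ : 0 < Δ)
    (hB : B = A + m * h) (hC : C = B + Δ) (q : ℕ) (hq : q ≤ m + 2) :
    ∃ β1 β2 u1 : ℝ, u1 ∈ Set.Icc A B ∧
      ∀ t ∈ Set.Icc A B, pp (t - tau A h q) = β1 * rmp C u1 t + β2 * rmp C B t := by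
  have hAB : A ≤ B := by
    rw [hB]; nlinarith [Nat.cast_nonneg (α := ℝ) m]
  subst hC
  rcases Nat.eq_zero_or_pos q with hq0 | hq1
  · subst hq0
    refine ⟨-1, (B + Δ - A + h) / Δ, A, ⟨le_refl A, hAB⟩, fun t ht => ?_⟩
    obtain ⟨ht1, ht2⟩ := ht
    have e0 : tau A h 0 = A - h := by rw [tau_eq]; push_cast; ring
    rw [e0, pp_of_nonneg (by linarith)]
    simp only [rmp, max_eq_left ht1, max_eq_right ht2]
    field_simp
    try ring
  rcases Nat.lt_or_ge q (m + 2) with hqm | hqm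
  · have hq1' : (1 : ℝ) ≤ (q : ℝ) := by exact_mod_cast hq1
    have hqm' : (q : ℝ) ≤ (m : ℝ) + 1 := by exact_mod_cast Nat.lt_succ_iff.mp (by omega)
    have hu : tau A h q ∈ Set.Icc A B := by
      constructor
      · rw [tau_eq]; nlinarith
      · rw [tau_eq, hB]; nlinarith
    refine ⟨-1, (B + Δ - tau A h q) / Δ, tau A h q, hu, fun t ht => ?_⟩
    obtain ⟨ht1, ht2⟩ := ht
    have hmax : pp (t - tau A h q) = max t (tau A h q) - tau A h q := by
      unfold pp
      rw [← max_sub_sub_right t (tau A h q) (tau A h q)]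
      simp
    rw [hmax]
    simp only [rmp, max_eq_right ht2]
    field_simp
    try ring
  · have hq2 : q = m + 2 := le_antisymm hq hqm
    subst hq2
    refine ⟨0, 0, A, ⟨le_refl A, hAB⟩, fun t ht => ?_⟩
    obtain ⟨ht1, ht2⟩ := ht
    have em2 : tau A h (m + 2) = A + m * h + h := by rw [tau_eq]; push_cast; ring
    rw [em2, pp_of_nonpos (by rw [hB] at ht2; linarith)]
    ring

private lemma hat_repr (A B C Δ h : ℝ) (m : ℕ) (hh : 0 < h) (hΔ : 0 < Δ)
    (hB : B = A + m * h) (hC : C = B + Δ) (p : ℕ) (hp : p ≤ m) :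
    ∃ β u : Fin 6 → ℝ, (∀ s, u s ∈ Set.Icc A B) ∧
      ∀ t ∈ Set.Icc A B, hat A h t p = ∑ s, β s * rmp C (u s) t := by
  have hAB : A ≤ B := by
    rw [hB]; nlinarith [Nat.cast_nonneg (α := ℝ) m]
  obtain ⟨b1, b2, u1, hu1, he1⟩ := pp_repr A B C Δ h m hh hΔ hB hC p (by omega)
  obtain ⟨c1, c2, v1, hv1, he2⟩ := pp_repr A B C Δ h m hh hΔ hB hC (p + 1) (by omega)
  obtain ⟨d1, d2, w1, hw1, he3⟩ := pp_repr A B C Δ h m hh hΔ hB hC (p + 2) (by omega)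
  refine ⟨![b1/h, b2/h, -2*c1/h, -2*c2/h, d1/h, d2/h], ![u1, B, v1, B, w1, B], ?_, ?_⟩
  · intro s
    fin_cases s <;>
      first
        | exact hu1
        | exact hv1
        | exact hw1
        | exact ⟨hAB, le_refl B⟩
  · intro t ht
    rw [hat, he1 t ht, he2 t ht, he3 t ht, Fin.sum_univ_six]
    simp only [Matrix.cons_val_succ, Matrix.cons_val_zero, Matrix.cons_val,
      show (![b1/h, b2/h, -2*c1/h, -2*c2/h, d1/h, d2/h] : Fin 6 → ℝ) 5 = d2/h from rfl,
      show (![u1, B, v1, B, w1, B] : Fin 6 → ℝ) 5 = B from rfl]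
    field_simp
    ring

/-- the kernel `k(x,y) = ∏ i (bᵢ + δᵢ − max{xᵢ,yᵢ})` is universal on `X = [a,b]`:
it is continuous and the span of its sections is dense in `C(X)` with the uniform norm. -/
theorem stmt_10 {n : ℕ} (a b δ : Fin n → ℝ) (hab : ∀ i, a i < b i) (hδ : ∀ i, 0 < δ i)
    (k : (Fin n → ℝ) → (Fin n → ℝ) → ℝ)
    (hk : ∀ x y, k x y = ∏ i, (b i + δ i - max (x i) (y i))) :
    Continuous (fun q : (Fin n → ℝ) × (Fin n → ℝ) => k q.1 q.2) ∧
    ∀ g : (Fin n → ℝ) → ℝ, ContinuousOn g (Set.Icc a b) →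
      ∀ ε > 0, ∃ (M : ℕ) (α : Fin M → ℝ) (y : Fin M → (Fin n → ℝ)),
        (∀ j, y j ∈ Set.Icc a b) ∧
        ∀ x ∈ Set.Icc a b, |g x - ∑ j, α j * k x (y j)| ≤ ε := by
  constructor
  · have hke : (fun q : (Fin n → ℝ) × (Fin n → ℝ) => k q.1 q.2)
        = fun q => ∏ i, (b i + δ i - max (q.1 i) (q.2 i)) := funext fun q => hk q.1 q.2
    rw [hke]
    exact continuous_finset_prod _ fun i _ =>
      continuous_const.sub (((continuous_apply i).comp continuous_fst).max
        ((continuous_apply i).comp continuous_snd))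
  intro g hg ε hε
  have hcomp : IsCompact (Set.Icc a b) := isCompact_Icc
  have hUC : UniformContinuousOn g (Set.Icc a b) :=
    hcomp.uniformContinuousOn_of_continuous hg
  rw [Metric.uniformContinuousOn_iff] at hUC
  obtain ⟨η, hη, hUC⟩ := hUC ε hε
  obtain ⟨m, hm⟩ := exists_nat_gt ((∑ i, (b i - a i)) / η)
  have hsum_nonneg : 0 ≤ ∑ i, (b i - a i) :=
    Finset.sum_nonneg fun i _ => by linarith [hab i]
  have hm0 : 0 < m := by
    rcases Nat.eq_zero_or_pos m with h0 | h0
    · exfalso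
      subst h0
      have : (0:ℝ) ≤ (∑ i, (b i - a i)) / η := div_nonneg hsum_nonneg hη.le
      rw [Nat.cast_zero] at hm
      linarith
    · exact h0
  have hmR : (0:ℝ) < m := by exact_mod_cast hm0
  set h : Fin n → ℝ := fun i => (b i - a i) / m with hhdef
  have hh : ∀ i, 0 < h i := fun i => div_pos (by linarith [hab i]) hmR
  have hB : ∀ i, b i = a i + m * h i := by
    intro i
    simp only [hhdef]
    field_simp
    ring
  have hhη : ∀ i, h i < η := by
    intro i
    have h1 : b i - a i ≤ ∑ j, (b j - a j) :=
      Finset.single_le_sum (f := fun j => b j - a j) (fun j _ => sub_nonneg.mpr (hab j).le)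
        (Finset.mem_univ i)
    have h2 : (∑ j, (b j - a j)) < η * m := by
      rw [div_lt_iff₀ hη] at hm
      linarith [hm]
    simp only [hhdef]
    rw [div_lt_iff₀ hmR]
    calc b i - a i ≤ ∑ j, (b j - a j) := h1
      _ < η * m := h2
  have hrep : ∀ i (p : Fin (m+1)), ∃ β u : Fin 6 → ℝ,
      (∀ s, u s ∈ Set.Icc (a i) (b i)) ∧
      ∀ t ∈ Set.Icc (a i) (b i),
        hat (a i) (h i) t (p : ℕ) = ∑ s, β s * rmp (b i + δ i) (u s) t :=
    fun i p => hat_repr (a i) (b i) (b i + δ i) (δ i) (h i) m (hh i) (hδ i) (hB i) rfl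
      (p : ℕ) (Nat.lt_succ_iff.mp p.isLt)
  choose β u hu hrepr using hrep
  set node : (Fin n → Fin (m+1)) → Fin n → ℝ :=
    fun P i => tau (a i) (h i) ((P i : ℕ) + 1) with hnode
  have hnodemem : ∀ P, node P ∈ Set.Icc a b := by
    intro P
    rw [Set.mem_Icc]
    constructor <;> intro i
    · simp only [hnode, tau_eq]
      push_cast
      nlinarith [(hh i).le, Nat.cast_nonneg (α := ℝ) ((P i : ℕ))]
    · simp only [hnode, tau_eq]
      push_cast
      have hple : ((P i : ℕ) : ℝ) ≤ (m : ℝ) := by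
        exact_mod_cast Nat.lt_succ_iff.mp (P i).isLt
      rw [hB i]
      nlinarith [(hh i).le]
  set W : (Fin n → Fin (m+1)) → (Fin n → ℝ) → ℝ :=
    fun P x => ∏ i, hat (a i) (h i) (x i) ((P i : ℕ)) with hW
  have hWsum : ∀ x ∈ Set.Icc a b, ∑ P : Fin n → Fin (m+1), W P x = 1 := by
    intro x hx
    rw [Set.mem_Icc] at hx
    have hps : ∏ i, ∑ p ∈ (Finset.univ : Finset (Fin (m+1))), hat (a i) (h i) (x i) (p : ℕ)
        = ∑ P ∈ Fintype.piFinset (fun _ : Fin n => (Finset.univ : Finset (Fin (m+1)))),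
            ∏ i, hat (a i) (h i) (x i) ((P i : ℕ)) := Finset.prod_univ_sum _ _
    rw [Fintype.piFinset_univ] at hps
    calc ∑ P : Fin n → Fin (m+1), W P x
        = ∏ i, ∑ p : Fin (m+1), hat (a i) (h i) (x i) (p : ℕ) := hps.symm
      _ = ∏ i, (1 : ℝ) := by
          refine Finset.prod_congr rfl fun i _ => ?_
          rw [Fin.sum_univ_eq_sum_range (fun p => hat (a i) (h i) (x i) p) (m+1)]
          exact hat_sum (a i) (h i) (x i) m (hh i) (hx.1 i) (by rw [← hB i]; exact hx.2 i)
      _ = 1 := Finset.prod_const_one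
  have hkey : ∀ x ∈ Set.Icc a b,
      |g x - ∑ P : Fin n → Fin (m+1), g (node P) * W P x| ≤ ε := by
    intro x hx
    have hgx : g x = ∑ P : Fin n → Fin (m+1), g x * W P x := by
      rw [← Finset.mul_sum, hWsum x hx, mul_one]
    rw [hgx, ← Finset.sum_sub_distrib]
    have habs := Finset.abs_sum_le_sum_abs
      (fun P : Fin n → Fin (m+1) => g x * W P x - g (node P) * W P x) Finset.univ
    refine le_trans habs ?_
    have hbound : ∀ P : Fin n → Fin (m+1),
        |g x * W P x - g (node P) * W P x| ≤ ε * W P x := by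
      intro P
      have hWnn : (0:ℝ) ≤ W P x :=
        Finset.prod_nonneg fun i _ => hat_nonneg _ _ _ _ (hh i)
      by_cases hW0 : W P x = 0
      · rw [hW0]; simp
      · have hfac : ∀ i, hat (a i) (h i) (x i) ((P i : ℕ)) ≠ 0 := by
          intro i hzero
          exact hW0 (Finset.prod_eq_zero (Finset.mem_univ i) hzero)
        have hdist : dist x (node P) < η := by
          rw [dist_pi_lt_iff hη]
          intro i
          rw [Real.dist_eq]
          calc |x i - node P i| < h i :=
                hat_support (a i) (h i) (x i) ((P i : ℕ)) (hh i) (hfac i)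
            _ < η := hhη i
        have hgdist : |g x - g (node P)| < ε := by
          have := hUC x hx (node P) (hnodemem P) hdist
          rwa [Real.dist_eq] at this
        calc |g x * W P x - g (node P) * W P x|
            = |g x - g (node P)| * |W P x| := by rw [← sub_mul, abs_mul]
          _ = |g x - g (node P)| * W P x := by rw [abs_of_nonneg hWnn]
          _ ≤ ε * W P x := mul_le_mul_of_nonneg_right hgdist.le hWnn
    calc ∑ P : Fin n → Fin (m+1), |g x * W P x - g (node P) * W P x|
        ≤ ∑ P : Fin n → Fin (m+1), ε * W P x := Finset.sum_le_sum fun P _ => hbound P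
      _ = ε * ∑ P : Fin n → Fin (m+1), W P x := by rw [← Finset.mul_sum]
      _ = ε := by rw [hWsum x hx, mul_one]
  set Y : (Fin n → Fin (m+1)) × (Fin n → Fin 6) → (Fin n → ℝ) :=
    fun PS i => u i (PS.1 i) (PS.2 i) with hY
  set c0 : (Fin n → Fin (m+1)) × (Fin n → Fin 6) → ℝ :=
    fun PS => g (node PS.1) * ∏ i, β i (PS.1 i) (PS.2 i) with hc0
  have hexp : ∀ x ∈ Set.Icc a b,
      ∑ P : Fin n → Fin (m+1), g (node P) * W P x
        = ∑ PS : (Fin n → Fin (m+1)) × (Fin n → Fin 6), c0 PS * k x (Y PS) := by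
    intro x hx
    rw [Set.mem_Icc] at hx
    rw [Fintype.sum_prod_type]
    refine Finset.sum_congr rfl fun P _ => ?_
    have hWx : W P x = ∑ S : Fin n → Fin 6,
        (∏ i, β i (P i) (S i)) * ∏ i, rmp (b i + δ i) (u i (P i) (S i)) (x i) := by
      have h1 : W P x = ∏ i, ∑ s : Fin 6, β i (P i) s * rmp (b i + δ i) (u i (P i) s) (x i) :=
        Finset.prod_congr rfl fun i _ => hrepr i (P i) (x i) ⟨hx.1 i, hx.2 i⟩
      rw [h1, Finset.prod_univ_sum, Fintype.piFinset_univ]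
      exact Finset.sum_congr rfl fun S _ => by rw [← Finset.prod_mul_distrib]
    rw [hWx, Finset.mul_sum]
    refine Finset.sum_congr rfl fun S _ => ?_
    have hkY : k x (Y (P, S)) = ∏ i, rmp (b i + δ i) (u i (P i) (S i)) (x i) := by
      rw [hk]
      exact Finset.prod_congr rfl fun i _ => rfl
    rw [hkY]
    simp only [hc0]
    ring
  refine ⟨Fintype.card ((Fin n → Fin (m+1)) × (Fin n → Fin 6)),
    fun j => c0 ((Fintype.equivFin ((Fin n → Fin (m+1)) × (Fin n → Fin 6))).symm j),
    fun j => Y ((Fintype.equivFin ((Fin n → Fin (m+1)) × (Fin n → Fin 6))).symm j), ?_, ?_⟩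
  · intro j
    rw [Set.mem_Icc]
    constructor <;> intro i <;> simp only [hY]
    · exact (hu i _ _).1
    · exact (hu i _ _).2
  · intro x hx
    have hsum : ∑ j, c0 ((Fintype.equivFin ((Fin n → Fin (m+1)) × (Fin n → Fin 6))).symm j)
          * k x (Y ((Fintype.equivFin ((Fin n → Fin (m+1)) × (Fin n → Fin 6))).symm j))
        = ∑ PS : (Fin n → Fin (m+1)) × (Fin n → Fin 6), c0 PS * k x (Y PS) :=
      Equiv.sum_comp (Fintype.equivFin ((Fin n → Fin (m+1)) × (Fin n → Fin 6))).symm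
        (fun PS => c0 PS * k x (Y PS))
    rw [hsum, ← hexp x hx]
    exact hkey x hx
end StmtTen
end

section
/- Let a < b be real numbers and δ > 0. Then the kernel k : [a,b] × [a,b] → ℝ defined by k(x,y) := b + δ − max{x, y} is universal on [a,b]: k is continuous and the linear span of the functions {x ↦ k(x,y) : y ∈ [a,b]} is dense in C([a,b]) with the uniform norm. -/
/-- the kernel `k(x,y) = b + δ − max{x,y}` is universal on `[a,b]`: it is
continuous and the span of its sections is dense in `C([a,b])` with the uniform norm. -/
theorem stmt_12 (a b δ : ℝ) (hab : a < b) (hδ : 0 < δ)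
    (k : ℝ → ℝ → ℝ) (hk : ∀ x y, k x y = b + δ - max x y) :
    Continuous (fun q : ℝ × ℝ => k q.1 q.2) ∧
    ∀ g : ℝ → ℝ, ContinuousOn g (Set.Icc a b) →
      ∀ ε > 0, ∃ (M : ℕ) (α : Fin M → ℝ) (y : Fin M → ℝ),
        (∀ j, y j ∈ Set.Icc a b) ∧
        ∀ x ∈ Set.Icc a b, |g x - ∑ j, α j * k x (y j)| ≤ ε := by
  constructor
  · have : (fun q : ℝ × ℝ => k q.1 q.2) = fun q : ℝ × ℝ => b + δ - max q.1 q.2 := by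
      funext q; exact hk q.1 q.2
    rw [this]; fun_prop
  intro g hg ε hε
  have huc := (isCompact_Icc.uniformContinuousOn_of_continuous hg)
  rw [Metric.uniformContinuousOn_iff] at huc
  obtain ⟨η, hη, huc⟩ := huc ε hε
  obtain ⟨n, hn⟩ := exists_nat_gt ((b - a) / η)
  set N : ℕ := n + 1 with hN
  have hNpos : 0 < (N : ℝ) := by positivity
  have hN0 : (N : ℝ) ≠ 0 := hNpos.ne'
  set h : ℝ := (b - a) / N with hhdef
  have hh : 0 < h := div_pos (by linarith) hNpos
  have hNh : (N : ℝ) * h = b - a := by rw [hhdef]; field_simp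
  have hhη : h < η := by
    have hNn : (b - a) / η < (N : ℝ) := lt_trans hn (by exact_mod_cast Nat.lt_succ_self n)
    rw [div_lt_iff₀ hη] at hNn
    rw [hhdef, div_lt_iff₀ hNpos]; linarith
  set p : ℕ → ℝ := fun i => a + i * h with hpdef
  have hp0 : p 0 = a := by simp [hpdef]
  have hppp : ∀ m : ℕ, p (m + 1) = p m + h := by
    intro m; simp only [hpdef]; push_cast; ring
  have hpN : p N = b := by simp only [hpdef]; rw [hNh]; ring
  have hpmono : ∀ i j : ℕ, i ≤ j → p i ≤ p j := by
    intro i j hij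
    simp only [hpdef]
    have : (i : ℝ) ≤ j := by exact_mod_cast hij
    nlinarith
  have hpIcc : ∀ i : ℕ, i ≤ N → p i ∈ Set.Icc a b := by
    intro i hi
    exact ⟨hp0 ▸ hpmono 0 i (Nat.zero_le i), hpN ▸ hpmono i N hi⟩
  set s : ℕ → ℝ := fun i => (g (p (i + 1)) - g (p i)) / h with hsdef
  set c : ℕ → ℝ := fun i => if i = 0 then s 0 else s i - s (i - 1) with hcdef
  have key1 : ∀ (m : ℕ) (x : ℝ),
      ∑ i ∈ Finset.range (m + 1), c i * (x - p i) = s m * (x - p m) + (g (p m) - g a) := by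
    intro m
    induction m with
    | zero => intro x; simp [hcdef, hp0]
    | succ m ih =>
      intro x
      rw [Finset.sum_range_succ, ih]
      have hc : c (m + 1) = s (m + 1) - s m := by simp [hcdef]
      have hsm : s m * h = g (p (m + 1)) - g (p m) := by
        simp only [hsdef]; field_simp
      rw [hc]
      linear_combination hsm + s m * hppp m
  set F : ℝ → ℝ := fun x => g a + ∑ i ∈ Finset.range N, c i * max (x - p i) 0 with hFdef
  have key2 : ∀ m : ℕ, m < N → ∀ x ∈ Set.Icc (p m) (p (m + 1)),
      F x = g (p m) + s m * (x - p m) := by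
    intro m hm x hx
    have hsplit := Finset.sum_range_add_sum_Ico (fun i => c i * max (x - p i) 0)
      (Nat.succ_le_of_lt hm)
    have h1 : ∀ i ∈ Finset.range (m + 1), c i * max (x - p i) 0 = c i * (x - p i) := by
      intro i hi
      rw [Finset.mem_range] at hi
      have : p i ≤ x := le_trans (hpmono i m (Nat.lt_succ_iff.mp hi)) hx.1
      rw [max_eq_left (by linarith)]
    have h2 : ∀ i ∈ Finset.Ico (m + 1) N, c i * max (x - p i) 0 = 0 := by
      intro i hi
      rw [Finset.mem_Ico] at hi
      have : x ≤ p i := le_trans hx.2 (hpmono (m + 1) i hi.1)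
      rw [max_eq_right (by linarith), mul_zero]
    have e : ∑ i ∈ Finset.range N, c i * max (x - p i) 0
        = s m * (x - p m) + (g (p m) - g a) := by
      rw [← hsplit, Finset.sum_eq_zero h2, add_zero, Finset.sum_congr rfl h1, key1]
    simp only [hFdef, e]; ring
  have key3 : ∀ x ∈ Set.Icc a b, ∃ m : ℕ, m < N ∧ x ∈ Set.Icc (p m) (p (m + 1)) := by
    intro x hx
    by_cases hxb : x = b
    · refine ⟨n, Nat.lt_succ_self n, ?_, ?_⟩
      · subst hxb; rw [← hpN]; exact hpmono n N (Nat.le_succ n)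
      · subst hxb; rw [show n + 1 = N from rfl, hpN]
    · have hxlt : x < b := lt_of_le_of_ne hx.2 hxb
      have ht0 : 0 ≤ (x - a) / h := div_nonneg (by linarith [hx.1]) hh.le
      set m : ℕ := ⌊(x - a) / h⌋.toNat with hm
      have hmr : (m : ℝ) = (⌊(x - a) / h⌋ : ℤ) := by
        rw [hm]; exact_mod_cast Int.toNat_of_nonneg (Int.floor_nonneg.mpr ht0)
      have h1 : (m : ℝ) ≤ (x - a) / h := by rw [hmr]; exact Int.floor_le _
      have h2 : (x - a) / h < (m : ℝ) + 1 := by rw [hmr]; exact Int.lt_floor_add_one _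
      rw [le_div_iff₀ hh] at h1
      rw [div_lt_iff₀ hh] at h2
      have hmN : m < N := by
        have hxN : x - a < (N : ℝ) * h := by rw [hNh]; linarith
        have : (m : ℝ) < N := by nlinarith
        exact_mod_cast this
      refine ⟨m, hmN, ?_, ?_⟩
      · simp only [hpdef]; linarith
      · simp only [hpdef]; push_cast; nlinarith
  have key4 : ∀ x ∈ Set.Icc a b, |g x - F x| ≤ ε := by
    intro x hx
    obtain ⟨m, hmN, hxm⟩ := key3 x hx
    rw [key2 m hmN x hxm]
    have hpm : p m ∈ Set.Icc a b := hpIcc m hmN.le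
    have hpm1 : p (m + 1) ∈ Set.Icc a b := hpIcc (m + 1) hmN
    have hwid : p (m + 1) - p m = h := by rw [hppp m]; ring
    have d1 : |g x - g (p m)| ≤ ε := by
      have := huc x hx (p m) hpm (by
        rw [Real.dist_eq, abs_of_nonneg (by linarith [hxm.1])]
        linarith [hxm.2])
      rw [Real.dist_eq] at this; linarith
    have d2 : |g x - g (p (m + 1))| ≤ ε := by
      have := huc x hx (p (m + 1)) hpm1 (by
        rw [Real.dist_eq, abs_of_nonpos (by linarith [hxm.2])]
        linarith [hxm.1])
      rw [Real.dist_eq] at this; linarith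
    set θ : ℝ := (x - p m) / h with hθ
    have hθ0 : 0 ≤ θ := div_nonneg (by linarith [hxm.1]) hh.le
    have hθ1 : θ ≤ 1 := by
      rw [hθ, div_le_one hh]; linarith [hxm.2]
    have hF : g x - (g (p m) + s m * (x - p m))
        = (1 - θ) * (g x - g (p m)) + θ * (g x - g (p (m + 1))) := by
      simp only [hsdef, hθ]; field_simp; ring
    rw [hF]
    calc |(1 - θ) * (g x - g (p m)) + θ * (g x - g (p (m + 1)))|
        ≤ (1 - θ) * |g x - g (p m)| + θ * |g x - g (p (m + 1))| := by
          refine (abs_add_le _ _).trans ?_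
          rw [abs_mul, abs_mul, abs_of_nonneg (by linarith), abs_of_nonneg hθ0]
      _ ≤ (1 - θ) * ε + θ * ε := by
          exact add_le_add (mul_le_mul_of_nonneg_left d1 (by linarith))
            (mul_le_mul_of_nonneg_left d2 hθ0)
      _ = ε := by ring
  refine ⟨N + 1,
    (fun j => if (j : ℕ) = N then (g a + ∑ i ∈ Finset.range N, c i * (b + δ - p i)) / δ
      else -(c (j : ℕ))),
    (fun j => if (j : ℕ) = N then b else p (j : ℕ)), ?_, ?_⟩
  · intro j
    by_cases hj : (j : ℕ) = N
    · simp only [hj, if_pos rfl]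
      exact ⟨le_of_lt hab, le_refl b⟩
    · simp only [if_neg hj]
      exact hpIcc _ (Nat.lt_succ_iff.mp j.isLt |>.lt_of_ne hj).le
  · intro x hx
    have hsum : (∑ j : Fin (N + 1),
        (if (j : ℕ) = N then (g a + ∑ i ∈ Finset.range N, c i * (b + δ - p i)) / δ
          else -(c (j : ℕ))) * k x (if (j : ℕ) = N then b else p (j : ℕ))) = F x := by
      rw [Fin.sum_univ_castSucc]
      have hlastv : ((Fin.last N : Fin (N + 1)) : ℕ) = N := rfl
      have hlast : (if ((Fin.last N : Fin (N + 1)) : ℕ) = N then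
            (g a + ∑ i ∈ Finset.range N, c i * (b + δ - p i)) / δ else -(c ((Fin.last N) : ℕ)))
            * k x (if ((Fin.last N : Fin (N + 1)) : ℕ) = N then b else p ((Fin.last N) : ℕ))
          = g a + ∑ i ∈ Finset.range N, c i * (b + δ - p i) := by
        rw [hlastv]
        simp only [eq_self_iff_true, if_true]
        rw [hk, max_eq_right hx.2]
        field_simp
        ring
      rw [hlast]
      have hcs : ∀ j : Fin N, (if ((j.castSucc : Fin (N + 1)) : ℕ) = N then
            (g a + ∑ i ∈ Finset.range N, c i * (b + δ - p i)) / δ else -(c ((j.castSucc) : ℕ)))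
            * k x (if ((j.castSucc : Fin (N + 1)) : ℕ) = N then b else p ((j.castSucc) : ℕ))
          = -(c (j : ℕ)) * (b + δ - max x (p (j : ℕ))) := by
        intro j
        have hjv : ((j.castSucc : Fin (N + 1)) : ℕ) = (j : ℕ) := rfl
        rw [hjv, if_neg (Nat.ne_of_lt j.isLt), if_neg (Nat.ne_of_lt j.isLt), hk]
      rw [Finset.sum_congr rfl (fun j _ => hcs j), Fin.sum_univ_eq_sum_range
        (fun i => -(c i) * (b + δ - max x (p i))) N]
      have hterm : ∀ i ∈ Finset.range N,
          -(c i) * (b + δ - max x (p i)) + c i * (b + δ - p i) = c i * max (x - p i) 0 := by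
        intro i _
        have hmx : max (x - p i) 0 = max x (p i) - p i := by
          rw [← max_sub_sub_right x (p i) (p i), sub_self]
        rw [hmx]; ring
      have : (∑ i ∈ Finset.range N, -(c i) * (b + δ - max x (p i)))
          + (g a + ∑ i ∈ Finset.range N, c i * (b + δ - p i))
          = g a + ∑ i ∈ Finset.range N, c i * max (x - p i) 0 := by
        rw [← Finset.sum_congr rfl hterm, Finset.sum_add_distrib]
        ring
      rw [this]
    rw [hsum]
    exact key4 x hx
end

section
/- Let a, b, δ ∈ ℝ^n with a < b and δ > 0 componentwise, X := [a,b], and k(x,y) := ∏_{i=1}^n (b_i + δ_i − max{x_i, y_i}). Then for every multi-index γ ∈ ℕ^n and every ε > 0 there exist m ∈ ℕ, coefficients α_1,…,α_m ∈ ℝ, and points y_1,…,y_m ∈ X such that sup_{x ∈ X} | x^γ − ∑_{j=1}^m α_j k(x, y_j) | ≤ ε, where x^γ := ∏_{i=1}^n x_i^{γ_i}. -/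
open Finset Submodule

private lemma habs_aux {A B x : ℝ} (hx : x ∈ Set.Icc A B) : |x| ≤ max |A| |B| := by
  rcases hx with ⟨h1, h2⟩
  rw [abs_le]
  refine ⟨?_, ?_⟩
  · calc -(max |A| |B|) ≤ -|A| := by simp
      _ ≤ A := neg_abs_le A
      _ ≤ x := h1
  · calc x ≤ B := h2
      _ ≤ |B| := le_abs_self B
      _ ≤ max |A| |B| := le_max_right _ _

private lemma lip_pow {Mb : ℝ} (p : ℕ) {s t : ℝ} (hs : |s| ≤ Mb) (ht : |t| ≤ Mb) :
    |s ^ p - t ^ p| ≤ ((p : ℝ) * Mb ^ (p - 1)) * |s - t| := by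
  have hM : 0 ≤ Mb := le_trans (abs_nonneg s) hs
  rw [← geom_sum₂_mul s t p, abs_mul]
  apply mul_le_mul_of_nonneg_right _ (abs_nonneg _)
  calc |∑ i ∈ range p, s ^ i * t ^ (p - 1 - i)|
      ≤ ∑ i ∈ range p, |s ^ i * t ^ (p - 1 - i)| := Finset.abs_sum_le_sum_abs _ _
    _ ≤ ∑ i ∈ range p, Mb ^ (p - 1) := by
        apply Finset.sum_le_sum
        intro i hi
        have hip : i < p := Finset.mem_range.mp hi
        rw [abs_mul, abs_pow, abs_pow]
        have h1 : |s| ^ i ≤ Mb ^ i := pow_le_pow_left₀ (abs_nonneg s) hs i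
        have h2 : |t| ^ (p - 1 - i) ≤ Mb ^ (p - 1 - i) := pow_le_pow_left₀ (abs_nonneg t) ht _
        calc |s| ^ i * |t| ^ (p - 1 - i) ≤ Mb ^ i * Mb ^ (p - 1 - i) :=
              mul_le_mul h1 h2 (by positivity) (by positivity)
          _ = Mb ^ (p - 1) := by
              rw [← pow_add]
              congr 1
              omega
    _ = (p : ℝ) * Mb ^ (p - 1) := by
        rw [Finset.sum_const, Finset.card_range, nsmul_eq_mul]

private lemma oneD (A B C' : ℝ) (hAB : A < B) (hBC : B < C') (p : ℕ) (ε : ℝ) (hε : 0 < ε) :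
    ∃ g ∈ Submodule.span ℝ {h : ℝ → ℝ | ∃ t ∈ Set.Icc A B, h = fun s => C' - max s t},
      ∀ s ∈ Set.Icc A B, |s ^ p - g s| ≤ ε := by
  set Mb := max |A| |B| with hMb
  set L := (p : ℝ) * Mb ^ (p - 1) with hLdef
  have hMb0 : (0:ℝ) ≤ Mb := le_trans (abs_nonneg A) (le_max_left _ _)
  have hL0 : 0 ≤ L := by positivity
  obtain ⟨N0, hN0⟩ := exists_nat_ge (2 * L * (B - A) / ε)
  set N := N0 + 1 with hNdef
  have hNpos : (0:ℝ) < (N:ℝ) := by positivity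
  set hstep := (B - A) / (N:ℝ) with hhdef
  have hhpos : 0 < hstep := div_pos (sub_pos.mpr hAB) hNpos
  set tt : ℕ → ℝ := fun j => A + j * hstep with htt
  have hNh : (N:ℝ) * hstep = B - A := by
    rw [hhdef]; field_simp
  have httmem : ∀ j, j ≤ N → tt j ∈ Set.Icc A B := by
    intro j hj
    have hjN : (j:ℝ) ≤ (N:ℝ) := by exact_mod_cast hj
    constructor
    · simp only [htt]; nlinarith [hhpos.le]
    · simp only [htt]; nlinarith [hhpos.le]
  have habsT : ∀ x ∈ Set.Icc A B, |x| ≤ Mb := fun x hx => habs_aux hx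
  have hlip : ∀ x ∈ Set.Icc A B, ∀ y ∈ Set.Icc A B, |x ^ p - y ^ p| ≤ L * |x - y| :=
    fun x hx y hy => lip_pow p (habsT x hx) (habsT y hy)
  set sl : ℕ → ℝ := fun j => (tt (j+1) ^ p - tt j ^ p) / hstep with hsl
  have hstep_tt : ∀ j : ℕ, tt (j+1) - tt j = hstep := by
    intro j; simp only [htt]; push_cast; ring
  have hslL : ∀ j, j + 1 ≤ N → |sl j| ≤ L := by
    intro j hj
    have h1 := hlip (tt (j+1)) (httmem _ hj) (tt j) (httmem _ (by omega))
    rw [hstep_tt j, abs_of_pos hhpos] at h1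
    rw [hsl]
    rw [abs_div, abs_of_pos hhpos, div_le_iff₀ hhpos]
    linarith
  set g : ℝ → ℝ := (B ^ p / (C' - B)) • (fun s => C' - max s B) -
      ∑ j ∈ range N, sl j • ((fun s : ℝ => C' - max s (tt j)) - (fun s : ℝ => C' - max s (tt (j+1)))) with hg
  have hCB : C' - B ≠ 0 := sub_ne_zero.mpr hBC.ne'
  refine ⟨g, ?_, ?_⟩
  · apply Submodule.sub_mem
    · exact Submodule.smul_mem _ _ (subset_span ⟨B, ⟨hAB.le, le_refl B⟩, rfl⟩)
    · apply Submodule.sum_mem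
      intro j hj
      have hjN : j + 1 ≤ N := Finset.mem_range.mp hj
      exact Submodule.smul_mem _ _ (Submodule.sub_mem _
        (subset_span ⟨tt j, httmem j (by omega), rfl⟩)
        (subset_span ⟨tt (j+1), httmem (j+1) hjN, rfl⟩))
  · intro s hs
    set u : ℕ → ℝ := fun j => max s (tt j) with hu
    have hu0 : u 0 = s := by
      simp only [hu, htt]
      rw [Nat.cast_zero, zero_mul, add_zero]
      exact max_eq_left hs.1
    have httN : tt N = B := by
      simp only [htt]; rw [hNh]; ring
    have huN : u N = B := by
      simp only [hu]; rw [httN]; exact max_eq_right hs.2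
    -- evaluate g at s
    have hgs : g s = B ^ p - ∑ j ∈ range N, sl j * (u (j+1) - u j) := by
      rw [hg]
      simp only [Pi.sub_apply, Pi.smul_apply, Finset.sum_apply, smul_eq_mul]
      rw [max_eq_right hs.2, div_mul_cancel₀ _ hCB]
      congr 1
      apply Finset.sum_congr rfl
      intro j _
      simp only [hu]
      ring
    have tele : ∑ j ∈ range N, (u (j+1) ^ p - u j ^ p) = B ^ p - s ^ p := by
      rw [Finset.sum_range_sub (fun j => u j ^ p), hu0, huN]
    have key : s ^ p - g s =
        ∑ j ∈ range N, (sl j * (u (j+1) - u j) - (u (j+1) ^ p - u j ^ p)) := by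
      rw [Finset.sum_sub_distrib, tele, hgs]
      ring
    -- locate the cell containing s
    set j0 := min (N - 1) ⌊(s - A) / hstep⌋₊ with hj0
    have hfloor_le : (⌊(s - A) / hstep⌋₊ : ℝ) ≤ (s - A) / hstep :=
      Nat.floor_le (div_nonneg (sub_nonneg.mpr hs.1) hhpos.le)
    have hj0s : tt j0 ≤ s := by
      have h1 : (j0:ℝ) ≤ (s - A) / hstep :=
        le_trans (by exact_mod_cast Nat.cast_le.mpr (min_le_right (N-1) _)) hfloor_le
      have h2 : (j0:ℝ) * hstep ≤ s - A := (le_div_iff₀ hhpos).mp h1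
      simp only [htt]; linarith
    have hj0mem : j0 ∈ range N := Finset.mem_range.mpr (by omega)
    have hj01N : j0 + 1 ≤ N := by omega
    have httmono : ∀ i j : ℕ, i ≤ j → tt i ≤ tt j := by
      intro i j hij
      have : (i:ℝ) ≤ (j:ℝ) := by exact_mod_cast hij
      simp only [htt]; nlinarith [hhpos.le]
    have hDzero : ∀ j ∈ range N, j ≠ j0 →
        sl j * (u (j+1) - u j) - (u (j+1) ^ p - u j ^ p) = 0 := by
      intro j hj hne
      rcases lt_or_gt_of_ne hne with hlt | hgt
      · have h1 : tt (j+1) ≤ s := le_trans (httmono _ _ (by omega)) hj0s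
        have e1 : u j = s := by
          simp only [hu]; exact max_eq_left (le_trans (httmono _ _ (by omega)) hj0s)
        have e2 : u (j+1) = s := by simp only [hu]; exact max_eq_left h1
        rw [e1, e2]; ring
      · have hjN : j < N := Finset.mem_range.mp hj
        have hj0f : j0 = ⌊(s - A) / hstep⌋₊ := by
          rcases le_or_gt (⌊(s - A) / hstep⌋₊) (N-1) with hc | hc
          · exact min_eq_right hc
          · exfalso
            have : j0 = N - 1 := min_eq_left hc.le
            omega
        have h1 : (s - A) / hstep < (j0:ℝ) + 1 := by
          have hlt := Nat.lt_floor_add_one ((s - A) / hstep)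
          rw [hj0f]
          push_cast
          linarith
        have h2 : s < tt (j0 + 1) := by
          have h3 : s - A < ((j0:ℝ) + 1) * hstep := (div_lt_iff₀ hhpos).mp h1
          simp only [htt]; push_cast; linarith
        have h3 : tt (j0+1) ≤ tt j := httmono _ _ (by omega)
        have e1 : u j = tt j := by simp only [hu]; exact max_eq_right (le_trans h2.le h3)
        have e2 : u (j+1) = tt (j+1) := by
          simp only [hu]
          exact max_eq_right (le_trans h2.le (le_trans h3 (httmono _ _ (by omega))))
        rw [e1, e2, hstep_tt j, hsl]
        rw [div_mul_cancel₀ _ hhpos.ne']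
        ring
    have hsum : ∑ j ∈ range N, (sl j * (u (j+1) - u j) - (u (j+1) ^ p - u j ^ p))
        = sl j0 * (u (j0+1) - u j0) - (u (j0+1) ^ p - u j0 ^ p) :=
      Finset.sum_eq_single_of_mem j0 hj0mem hDzero
    rw [key, hsum]
    have e0 : u j0 = s := by simp only [hu]; exact max_eq_left hj0s
    rw [e0]
    have hsv : s ≤ u (j0+1) := by simp only [hu]; exact le_max_left _ _
    have hvB : u (j0+1) ∈ Set.Icc A B := by
      constructor
      · exact le_trans hs.1 hsv
      · simp only [hu]; exact max_le hs.2 (httmem _ hj01N).2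
    have hvs : u (j0+1) - s ≤ hstep := by
      simp only [hu]
      rcases max_cases s (tt (j0+1)) with ⟨hm, _⟩ | ⟨hm, _⟩
      · rw [hm]; linarith [hhpos.le]
      · rw [hm]
        have := hstep_tt j0
        linarith [hj0s]
    have hb1 : |u (j0+1) ^ p - s ^ p| ≤ L * (u (j0+1) - s) := by
      have h := hlip (u (j0+1)) hvB s hs
      rwa [abs_of_nonneg (sub_nonneg.mpr hsv)] at h
    have hb2 : |sl j0| ≤ L := hslL j0 hj01N
    have h2Lh : 2 * L * hstep ≤ ε := by
      have hA : 2 * L * (B - A) ≤ (N0:ℝ) * ε := (div_le_iff₀ hε).mp hN0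
      have hB2 : (N0:ℝ) ≤ (N:ℝ) := by rw [hNdef]; push_cast; linarith
      rw [hhdef]
      rw [show 2 * L * ((B - A) / (N:ℝ)) = (2 * L * (B - A)) / (N:ℝ) by ring]
      rw [div_le_iff₀ hNpos]
      have h4 : ε * (N0:ℝ) ≤ ε * (N:ℝ) := mul_le_mul_of_nonneg_left hB2 hε.le
      linarith
    calc |sl j0 * (u (j0+1) - s) - (u (j0+1) ^ p - s ^ p)|
        ≤ |sl j0 * (u (j0+1) - s)| + |u (j0+1) ^ p - s ^ p| := by
          have h := abs_add_le (sl j0 * (u (j0+1) - s)) (-(u (j0+1) ^ p - s ^ p))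
          rw [abs_neg] at h
          calc |sl j0 * (u (j0+1) - s) - (u (j0+1) ^ p - s ^ p)|
              = |sl j0 * (u (j0+1) - s) + -(u (j0+1) ^ p - s ^ p)| := by ring_nf
            _ ≤ _ := h
      _ ≤ L * hstep + L * hstep := by
          have e1 : |sl j0 * (u (j0+1) - s)| = |sl j0| * (u (j0+1) - s) := by
            rw [abs_mul, abs_of_nonneg (sub_nonneg.mpr hsv)]
          have e2 : |sl j0| * (u (j0+1) - s) ≤ L * hstep := by
            apply mul_le_mul hb2 hvs (by linarith) hL0
          have e3 : L * (u (j0+1) - s) ≤ L * hstep := mul_le_mul_of_nonneg_left hvs hL0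
          rw [e1]
          linarith
      _ ≤ ε := by linarith

private lemma prodApprox {n : ℕ} (a b : Fin n → ℝ) (hab : ∀ i, a i ≤ b i)
    (e : Fin n → ℝ → ((Fin n → ℝ) → ℝ)) (f : Fin n → ((Fin n → ℝ) → ℝ))
    (R : Fin n → ℝ) (hR : ∀ i, 0 ≤ R i)
    (hfR : ∀ i, ∀ x ∈ Set.Icc a b, |f i x| ≤ R i)
    (happ : ∀ i, ∀ ε > (0:ℝ), ∃ g ∈ Submodule.span ℝ
        {h : (Fin n → ℝ) → ℝ | ∃ t ∈ Set.Icc (a i) (b i), h = e i t},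
      ∀ x ∈ Set.Icc a b, |f i x - g x| ≤ ε)
    (s : Finset (Fin n)) :
    ∀ ε > (0:ℝ), ∃ g ∈ Submodule.span ℝ
      {h : (Fin n → ℝ) → ℝ | ∃ u : Fin n → ℝ,
        (∀ i, u i ∈ Set.Icc (a i) (b i)) ∧ h = ∏ i ∈ s, e i (u i)},
      ∀ x ∈ Set.Icc a b, |(∏ i ∈ s, f i) x - g x| ≤ ε := by
  induction s using Finset.induction_on with
  | empty =>
    intro ε hε
    refine ⟨1, ?_, ?_⟩
    · apply subset_span
      exact ⟨a, fun i => ⟨le_refl _, hab i⟩, by simp⟩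
    · intro x hx
      simp [hε.le]
  | @insert j s hj ih =>
    intro ε hε
    set Q := ∏ i ∈ s, R i with hQ
    have hQ0 : 0 ≤ Q := Finset.prod_nonneg (fun i _ => hR i)
    set ε1 := min 1 (ε / (2 * (R j + 1))) with hε1
    have hε1pos : 0 < ε1 := lt_min one_pos (div_pos hε (by have := hR j; linarith))
    have hε1le1 : ε1 ≤ 1 := min_le_left _ _
    set ε2 := ε / (2 * (Q + 1)) with hε2
    have hε2pos : 0 < ε2 := by positivity
    obtain ⟨g1, hg1mem, hg1⟩ := ih ε1 hε1pos
    obtain ⟨g2, hg2mem, hg2⟩ := happ j ε2 hε2pos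
    refine ⟨g2 * g1, ?_, ?_⟩
    · have hmul := Submodule.mul_mem_mul hg2mem hg1mem
      rw [Submodule.span_mul_span] at hmul
      refine Submodule.span_mono ?_ hmul
      rintro z hz
      rw [Set.mem_mul] at hz
      obtain ⟨pp, hp, qq, hq, rfl⟩ := hz
      obtain ⟨t, ht, rfl⟩ := hp
      obtain ⟨u, hu, rfl⟩ := hq
      refine ⟨Function.update u j t, ?_, ?_⟩
      · intro i
        by_cases hij : i = j
        · rw [hij, Function.update_self]; exact ht
        · rw [Function.update_of_ne hij]; exact hu i
      · rw [Finset.prod_insert hj, Function.update_self]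
        congr 1
        apply Finset.prod_congr rfl
        intro i hi
        rw [Function.update_of_ne (fun hcontra => hj (by rw [← hcontra]; exact hi))]
    · intro x hx
      have hPx : |(∏ i ∈ s, f i) x| ≤ Q := by
        rw [Finset.prod_apply, Finset.abs_prod]
        exact Finset.prod_le_prod (fun i _ => abs_nonneg _) (fun i _ => hfR i x hx)
      have h1 := hg1 x hx
      have h2 := hg2 x hx
      have hg1x : |g1 x| ≤ Q + 1 := by
        have he : g1 x = (∏ i ∈ s, f i) x - ((∏ i ∈ s, f i) x - g1 x) := by ring
        rw [he]
        have htri := abs_add_le ((∏ i ∈ s, f i) x) (-((∏ i ∈ s, f i) x - g1 x))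
        rw [abs_neg] at htri
        calc |(∏ i ∈ s, f i) x - ((∏ i ∈ s, f i) x - g1 x)|
            = |(∏ i ∈ s, f i) x + -((∏ i ∈ s, f i) x - g1 x)| := by ring_nf
          _ ≤ |(∏ i ∈ s, f i) x| + |(∏ i ∈ s, f i) x - g1 x| := htri
          _ ≤ Q + 1 := add_le_add hPx (le_trans h1 hε1le1)
      have expand : (∏ i ∈ insert j s, f i) x - (g2 * g1) x
          = f j x * ((∏ i ∈ s, f i) x - g1 x) + (f j x - g2 x) * g1 x := by
        rw [Finset.prod_insert hj]
        simp only [Pi.mul_apply]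
        ring
      rw [expand]
      have hRj1 : (0:ℝ) < R j + 1 := by have := hR j; linarith
      have hQ1 : (0:ℝ) < Q + 1 := by linarith
      have step1 : |f j x * ((∏ i ∈ s, f i) x - g1 x)| ≤ R j * ε1 := by
        rw [abs_mul]
        exact mul_le_mul (hfR j x hx) h1 (abs_nonneg _) (hR j)
      have step2 : |(f j x - g2 x) * g1 x| ≤ ε2 * (Q + 1) := by
        rw [abs_mul]
        exact mul_le_mul h2 hg1x (abs_nonneg _) hε2pos.le
      have bnd1 : R j * ε1 ≤ ε / 2 := by
        have hc : ε1 ≤ ε / (2 * (R j + 1)) := min_le_right _ _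
        have hc0 : (0:ℝ) ≤ ε / (2 * (R j + 1)) := by positivity
        have e1 : R j * ε1 ≤ R j * (ε / (2 * (R j + 1))) :=
          mul_le_mul_of_nonneg_left hc (hR j)
        have e2 : R j * (ε / (2 * (R j + 1))) ≤ (R j + 1) * (ε / (2 * (R j + 1))) := by
          apply mul_le_mul_of_nonneg_right _ hc0
          linarith
        have e3 : (R j + 1) * (ε / (2 * (R j + 1))) = ε / 2 := by
          field_simp
        linarith
      have bnd2 : ε2 * (Q + 1) = ε / 2 := by
        rw [hε2]
        field_simp
      calc |f j x * ((∏ i ∈ s, f i) x - g1 x) + (f j x - g2 x) * g1 x|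
          ≤ |f j x * ((∏ i ∈ s, f i) x - g1 x)| + |(f j x - g2 x) * g1 x| := abs_add_le _ _
        _ ≤ R j * ε1 + ε2 * (Q + 1) := add_le_add step1 step2
        _ ≤ ε / 2 + ε / 2 := by rw [bnd2]; linarith
        _ = ε := by ring

/-- every monomial `x^γ` can be uniformly approximated on `X = [a,b]` by finite
linear combinations of sections of the kernel `k(x,y) = ∏ i (bᵢ + δᵢ − max{xᵢ,yᵢ})`. -/
theorem stmt_13 {n : ℕ} (a b δ : Fin n → ℝ) (hab : ∀ i, a i < b i) (hδ : ∀ i, 0 < δ i)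
    (k : (Fin n → ℝ) → (Fin n → ℝ) → ℝ)
    (hk : ∀ x y, k x y = ∏ i, (b i + δ i - max (x i) (y i)))
    (γ : Fin n → ℕ) :
    ∀ ε > 0, ∃ (M : ℕ) (α : Fin M → ℝ) (y : Fin M → (Fin n → ℝ)),
      (∀ j, y j ∈ Set.Icc a b) ∧
      ∀ x ∈ Set.Icc a b, |(∏ i, x i ^ γ i) - ∑ j, α j * k x (y j)| ≤ ε := by
  intro ε hε
  set e : Fin n → ℝ → ((Fin n → ℝ) → ℝ) :=
    fun i t => fun x => b i + δ i - max (x i) t with he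
  set f : Fin n → ((Fin n → ℝ) → ℝ) := fun i => fun x => (x i) ^ (γ i) with hf
  set R : Fin n → ℝ := fun i => (max |a i| |b i|) ^ (γ i) with hRdef
  have hR : ∀ i, 0 ≤ R i := by
    intro i
    apply pow_nonneg
    exact le_trans (abs_nonneg _) (le_max_left _ _)
  have hcoord : ∀ x ∈ Set.Icc a b, ∀ i, x i ∈ Set.Icc (a i) (b i) := by
    intro x hx i
    exact ⟨hx.1 i, hx.2 i⟩
  have hfR : ∀ i, ∀ x ∈ Set.Icc a b, |f i x| ≤ R i := by
    intro i x hx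
    simp only [hf, hRdef]
    rw [abs_pow]
    exact pow_le_pow_left₀ (abs_nonneg _) (habs_aux (hcoord x hx i)) _
  have happ : ∀ i, ∀ ε' > (0:ℝ), ∃ g ∈ Submodule.span ℝ
      {h : (Fin n → ℝ) → ℝ | ∃ t ∈ Set.Icc (a i) (b i), h = e i t},
      ∀ x ∈ Set.Icc a b, |f i x - g x| ≤ ε' := by
    intro i ε' hε'
    obtain ⟨g', hg'mem, hg'⟩ :=
      oneD (a i) (b i) (b i + δ i) (hab i) (by linarith [hδ i]) (γ i) ε' hε'
    set Φ : (ℝ → ℝ) →ₗ[ℝ] ((Fin n → ℝ) → ℝ) :=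
      LinearMap.funLeft ℝ ℝ (fun x : Fin n → ℝ => x i) with hΦ
    refine ⟨Φ g', ?_, ?_⟩
    · have hmap : Φ g' ∈ Submodule.map Φ (Submodule.span ℝ
          {h : ℝ → ℝ | ∃ t ∈ Set.Icc (a i) (b i), h = fun s => b i + δ i - max s t}) :=
        Submodule.mem_map_of_mem hg'mem
      rw [Submodule.map_span] at hmap
      refine Submodule.span_mono ?_ hmap
      rintro z ⟨h', ⟨t, ht, rfl⟩, rfl⟩
      exact ⟨t, ht, rfl⟩
    · intro x hx
      have := hg' (x i) (hcoord x hx i)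
      simpa [hf, hΦ, LinearMap.funLeft_apply] using this
  obtain ⟨g, hgmem, hgbound⟩ :=
    prodApprox a b (fun i => (hab i).le) e f R hR hfR happ Finset.univ ε hε
  have hKmem : g ∈ Submodule.span ℝ
      {h : (Fin n → ℝ) → ℝ | ∃ y ∈ Set.Icc a b, h = fun x => k x y} := by
    refine Submodule.span_mono ?_ hgmem
    rintro z ⟨u, hu, rfl⟩
    refine ⟨u, ?_, ?_⟩
    · exact ⟨fun i => (hu i).1, fun i => (hu i).2⟩
    · funext x
      rw [Finset.prod_apply, hk x u]
  rw [mem_span_set'] at hKmem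
  obtain ⟨M, α, v, hsum⟩ := hKmem
  refine ⟨M, α, fun j => (v j).2.choose, fun j => (v j).2.choose_spec.1, ?_⟩
  intro x hx
  have hgx : g x = ∑ j, α j * k x ((v j).2.choose) := by
    rw [← hsum, Finset.sum_apply]
    apply Finset.sum_congr rfl
    intro j _
    rw [Pi.smul_apply, smul_eq_mul]
    congr 1
    exact congrFun (v j).2.choose_spec.2 x
  have hbd := hgbound x hx
  have hfx : (∏ i ∈ Finset.univ, f i) x = ∏ i, x i ^ γ i := by
    rw [Finset.prod_apply]
  rw [hfx, hgx] at hbd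
  exact hbd
end

section
/- Let A ∈ S^{n_P} be a real symmetric matrix with spectral decomposition A = ∑_i λ_i p_i p_iᵀ (orthonormal eigenvectors p_i, eigenvalues λ_i), and suppose y ∈ ℝ satisfies ∑_i max{λ_i − y, 0} = n_P. Then P := ∑_i max{λ_i − y, 0} · p_i p_iᵀ minimizes ‖P − A‖_F² over the set {P ∈ S^{n_P} : P ⪰ 0, trace(P) = n_P}; that is, P is the Frobenius-norm projection of A onto the trace-constrained positive semidefinite cone. -/
open Matrix

open Finset in

lemma key_scalar {n : ℕ} (lam : Fin n → ℝ) (y : ℝ) (d : Fin n → ℝ)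
    (hd : ∀ i, 0 ≤ d i) (hsum : ∑ i, d i = ∑ i, max (lam i - y) 0) :
    ∑ i, (max (lam i - y) 0 - lam i)^2 ≤ ∑ i, (d i - lam i)^2 := by
  set μ : Fin n → ℝ := fun i => max (lam i - y) 0 with hμ
  have cross : 0 ≤ ∑ i, (μ i - lam i) * (d i - μ i) := by
    have h1 : ∑ i, (μ i - lam i) * (d i - μ i)
        = ∑ i, (μ i - lam i + y) * (d i - μ i) - y * ∑ i, (d i - μ i) := by
      rw [Finset.mul_sum, ← Finset.sum_sub_distrib]
      congr 1; ext i; ring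
    have h2 : ∑ i, (d i - μ i) = 0 := by
      rw [Finset.sum_sub_distrib, hsum]; simp [hμ]
    rw [h1, h2, mul_zero, sub_zero]
    apply Finset.sum_nonneg
    intro i _
    rcases le_or_gt (lam i - y) 0 with h | h
    · have : μ i = 0 := max_eq_right h
      rw [this]
      have : 0 ≤ (0 : ℝ) - lam i + y := by linarith
      exact mul_nonneg this (by simpa using hd i)
    · have : μ i = lam i - y := max_eq_left h.le
      rw [this]; ring_nf; simp
  have expand : ∑ i, (d i - lam i)^2
      = ∑ i, (μ i - lam i)^2 + ∑ i, (d i - μ i)^2 + 2 * ∑ i, (μ i - lam i) * (d i - μ i) := by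
    rw [Finset.mul_sum, ← Finset.sum_add_distrib, ← Finset.sum_add_distrib]
    congr 1; ext i; ring
  have sq : 0 ≤ ∑ i, (d i - μ i)^2 := Finset.sum_nonneg fun i _ => sq_nonneg _
  nlinarith [expand, cross, sq]

/-- projection of a symmetric matrix `A = ∑ i, λᵢ pᵢ pᵢᵀ` onto the
trace-constrained PSD cone: if `∑ i, max (λᵢ − y) 0 = n_P` then
`P = ∑ i, max (λᵢ − y) 0 • pᵢ pᵢᵀ` minimizes `‖P − A‖_F²` over `{P ⪰ 0, trace P = n_P}`. -/
theorem stmt_17 {nP : ℕ}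
    (A : Matrix (Fin nP) (Fin nP) ℝ) (hA : A.IsSymm)
    (lam : Fin nP → ℝ) (p : Fin nP → (Fin nP → ℝ))
    (horth : ∀ i j, p i ⬝ᵥ p j = if i = j then (1 : ℝ) else 0)
    (hspec : A = ∑ i, lam i • Matrix.vecMulVec (p i) (p i))
    (y : ℝ) (hy : ∑ i, max (lam i - y) 0 = (nP : ℝ))
    (P : Matrix (Fin nP) (Fin nP) ℝ)
    (hP : P = ∑ i, max (lam i - y) 0 • Matrix.vecMulVec (p i) (p i)) :
    P.PosSemidef ∧ P.trace = (nP : ℝ) ∧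
    ∀ Q : Matrix (Fin nP) (Fin nP) ℝ, Q.PosSemidef → Q.trace = (nP : ℝ) →
      ((P - A)ᵀ * (P - A)).trace ≤ ((Q - A)ᵀ * (Q - A)).trace := by
  set μ : Fin nP → ℝ := fun i => max (lam i - y) 0 with hμdef
  set U : Matrix (Fin nP) (Fin nP) ℝ := fun i j => p j i with hUdef
  have hUtU : Uᵀ * U = 1 := by
    ext i j
    rw [Matrix.mul_apply]; simp only [Matrix.transpose_apply]; simp only [hUdef, Matrix.one_apply]
    simpa [dotProduct] using horth i j
  have hUUt : U * Uᵀ = 1 := mul_eq_one_comm.mp hUtU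
  have hUH : Uᴴ = Uᵀ := rfl
  have repr : ∀ c : Fin nP → ℝ,
      (∑ k, c k • Matrix.vecMulVec (p k) (p k)) = U * Matrix.diagonal c * Uᵀ := by
    intro c
    ext i j
    rw [Matrix.mul_apply]; simp only [Matrix.mul_diagonal, Matrix.transpose_apply]
    simp only [Matrix.mul_diagonal, Matrix.transpose_apply, Matrix.sum_apply,
      Matrix.smul_apply, Matrix.vecMulVec_apply, smul_eq_mul, hUdef]
    exact Finset.sum_congr rfl fun k _ => by ring
  have cancel : ∀ M : Matrix (Fin nP) (Fin nP) ℝ, U * (Uᵀ * M * U) * Uᵀ = M := by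
    intro M
    rw [show U * (Uᵀ * M * U) * Uᵀ = (U * Uᵀ) * M * (U * Uᵀ) by noncomm_ring, hUUt,
      Matrix.one_mul, Matrix.mul_one]
  have hArepr : A = U * Matrix.diagonal lam * Uᵀ := by rw [hspec, repr]
  have hPrepr : P = U * Matrix.diagonal μ * Uᵀ := by rw [hP, repr]
  have hμnn : ∀ i, 0 ≤ μ i := fun i => le_max_right _ _
  -- PSD
  have hPSD : P.PosSemidef := by
    rw [hPrepr, ← hUH]
    exact (Matrix.PosSemidef.diagonal hμnn).mul_mul_conjTranspose_same U
  refine ⟨hPSD, ?_, ?_⟩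
  · rw [hPrepr, Matrix.trace_mul_cycle, hUtU, Matrix.one_mul, Matrix.trace_diagonal]
    exact hy
  intro Q hQ hQtr
  set B : Matrix (Fin nP) (Fin nP) ℝ := Uᵀ * Q * U with hBdef
  have hQrepr : Q = U * B * Uᵀ := by
    rw [hBdef, cancel]
  have hBpsd : B.PosSemidef := by
    rw [hBdef, ← hUH]
    exact hQ.conjTranspose_mul_mul_same U
  have hBdiag : ∀ i, 0 ≤ B i i := by
    intro i
    have := hBpsd.dotProduct_mulVec_nonneg (Pi.single i 1)
    simpa using this
  have hBtr : ∑ i, B i i = (nP : ℝ) := by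
    have : B.trace = Q.trace := by
      rw [hBdef, Matrix.trace_mul_cycle, hUUt, Matrix.one_mul]
    rw [← hQtr, ← this]; rfl
  -- Frobenius reduction
  have frob : ∀ M : Matrix (Fin nP) (Fin nP) ℝ, (Mᵀ * M).trace = ∑ j, ∑ i, (M i j)^2 := by
    intro M
    simp [Matrix.trace, Matrix.diag, Matrix.mul_apply, sq]
  have conj_tr : ∀ M : Matrix (Fin nP) (Fin nP) ℝ,
      ((U * M * Uᵀ)ᵀ * (U * M * Uᵀ)).trace = (Mᵀ * M).trace := by
    intro M
    have : (U * M * Uᵀ)ᵀ * (U * M * Uᵀ) = U * (Mᵀ * M) * Uᵀ := by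
      simp only [Matrix.transpose_mul, Matrix.transpose_transpose]
      rw [show U * (Mᵀ * Uᵀ) * (U * M * Uᵀ) = U * Mᵀ * (Uᵀ * U) * (M * Uᵀ) by noncomm_ring,
        hUtU, Matrix.mul_one]
      noncomm_ring
    rw [this, Matrix.trace_mul_cycle, hUtU, Matrix.one_mul]
  have hPA : P - A = U * (Matrix.diagonal μ - Matrix.diagonal lam) * Uᵀ := by
    rw [hPrepr, hArepr, Matrix.mul_sub, Matrix.sub_mul]
  have hQA : Q - A = U * (B - Matrix.diagonal lam) * Uᵀ := by
    rw [hQrepr, hArepr, Matrix.mul_sub, Matrix.sub_mul]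
  rw [hPA, hQA, conj_tr, conj_tr, frob, frob]
  have lhs_eq : ∑ j, ∑ i, ((Matrix.diagonal μ - Matrix.diagonal lam) i j)^2
      = ∑ j, (μ j - lam j)^2 := by
    apply Finset.sum_congr rfl
    intro j _
    rw [Finset.sum_eq_single j]
    · simp
    · intro i _ hij; simp [Matrix.diagonal_apply_ne _ hij, Matrix.sub_apply]
    · simp
  rw [lhs_eq]
  calc ∑ j, (μ j - lam j)^2 ≤ ∑ j, ((B - Matrix.diagonal lam) j j)^2 := by
        have : ∀ j, ((B - Matrix.diagonal lam) j j) = B j j - lam j := by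
          intro j; simp [Matrix.sub_apply]
        simp only [this]
        exact key_scalar lam y (fun j => B j j) hBdiag (by rw [hBtr, hy])
    _ ≤ ∑ j, ∑ i, ((B - Matrix.diagonal lam) i j)^2 := by
        apply Finset.sum_le_sum
        intro j _
        exact Finset.single_le_sum (f := fun i => ((B - Matrix.diagonal lam) i j)^2)
          (fun i _ => sq_nonneg _) (Finset.mem_univ j)
end

section
/- Let a < b be real numbers, δ > 0, and k(x,y) := b + δ − max{x, y} for x,y ∈ [a,b]. Let β > 0, y_2 ∈ [a+β, b−β], y_1 := y_2 − β, y_3 := y_2 + β, and set α_1 = α_3 = −1/β, α_2 = 2/β. Then for all x ∈ [a,b], ∑_{j=1}^3 α_j k(x, y_j) equals the triangle function Λ(x) of height 1, width 2β, centered at y_2: Λ(x) = 0 if x < y_1; Λ(x) = (x − y_1)/β if y_1 ≤ x < y_2; Λ(x) = 1 − (x − y_2)/β if y_2 ≤ x < y_3; and Λ(x) = 0 if y_3 ≤ x. Moreover, (1/δ) k(x, b) = 1 for all x ∈ [a,b], so the constant function 1 also lies in the linear span of {k(·,y) : y ∈ [a,b]}. -/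
/-- the triangle function of height 1, width 2β, centered at `y₂` is a linear
combination of three sections of the kernel `k(x,y) = b + δ − max{x,y}`, and the constant
function 1 equals `(1/δ) k(·, b)`. -/
theorem stmt_19 (a b δ β y2 : ℝ) (hab : a < b) (hδ : 0 < δ) (hβ : 0 < β)
    (hy2 : y2 ∈ Set.Icc (a + β) (b - β))
    (k : ℝ → ℝ → ℝ) (hk : ∀ x y, k x y = b + δ - max x y)
    (y1 y3 : ℝ) (hy1 : y1 = y2 - β) (hy3 : y3 = y2 + β)
    (α1 α2 α3 : ℝ) (hα1 : α1 = -(1/β)) (hα2 : α2 = 2/β) (hα3 : α3 = -(1/β)) :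
    (∀ x ∈ Set.Icc a b,
      α1 * k x y1 + α2 * k x y2 + α3 * k x y3 =
        if x < y1 then 0
        else if x < y2 then (x - y1) / β
        else if x < y3 then 1 - (x - y2) / β
        else 0) ∧
    (∀ x ∈ Set.Icc a b, (1 / δ) * k x b = 1) := by
  obtain ⟨hy2a, hy2b⟩ := hy2
  constructor
  · intro x hx
    obtain ⟨hxa, hxb⟩ := hx
    simp only [hk, hα1, hα2, hα3, hy1, hy3]
    rcases lt_or_ge x (y2 - β) with h1 | h1
    · rw [if_pos h1, max_eq_right h1.le, max_eq_right (by linarith),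
        max_eq_right (by linarith)]
      field_simp
      ring
    · rw [if_neg (not_lt.2 h1), max_eq_left h1]
      rcases lt_or_ge x y2 with h2 | h2
      · rw [if_pos h2, max_eq_right h2.le, max_eq_right (by linarith)]
        field_simp
        ring
      · rw [if_neg (not_lt.2 h2), max_eq_left h2]
        rcases lt_or_ge x (y2 + β) with h3 | h3
        · rw [if_pos h3, max_eq_right h3.le]
          field_simp
          ring
        · rw [if_neg (not_lt.2 h3), max_eq_left h3]
          field_simp
          ring
  · intro x hx
    rw [hk, max_eq_right hx.2]
    field_simp
    ring
end
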